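/- arXiv:math/0311431 — 4 statements merged into one kernel-verified Lean document; each statement's English description precedes it below -/
import Mathlib

section
/- Suppose there exist constants C₀ > 0, A > 0 such that |∑_{n ≤ x} μ(n)| ≤ A * x * exp(-C₀ * (log x)^{3/5} * (log log x)^{-1/5}) for all x ≥ 3. Then there exist constants C > 0, B > 0 such that |∑_{m > y} μ(m)/m| ≤ B * exp(-C * (log y)^{3/5} * (log log y)^{-1/5}) for all y ≥ 3. -/
open Finset ArithmeticFunction Filter
open scoped ArithmeticFunction.Moebius

theorem aux_log_le_sqrt (u : ℝ) (hu : 0 ≤ u) : Real.log u ≤ Real.sqrt u := by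
  rcases eq_or_lt_of_le hu with h | h
  · simp [← h]
  · set w := Real.sqrt (Real.sqrt u) with hw
    have hw0 : 0 < w := Real.sqrt_pos.2 (Real.sqrt_pos.2 h)
    have hw2 : w ^ 2 = Real.sqrt u := Real.sq_sqrt (Real.sqrt_nonneg u)
    have hsq : (Real.sqrt u) ^ 2 = u := Real.sq_sqrt hu
    have hw4 : w ^ 4 = u := by nlinarith
    have h1 : Real.log u = 4 * Real.log w := by
      rw [← hw4, Real.log_pow]; norm_num
    have h2 : Real.log w ≤ w - 1 := Real.log_le_sub_one_of_pos hw0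
    have h3 : 0 ≤ (w - 2) ^ 2 := sq_nonneg _
    rw [h1, ← hw2]; nlinarith

theorem aux_exp_109 : Real.exp 1.09 ≤ 3 := by
  have h1 : Real.exp 1 < 2.7182818286 := Real.exp_one_lt_d9
  have h2 : Real.exp (0.09:ℝ) ≤ 1 / (1 - 0.09) := by
    have h := Real.add_one_le_exp (-0.09 : ℝ)
    rw [Real.exp_neg] at h
    have h3 : (0:ℝ) < Real.exp (0.09) := Real.exp_pos _
    rw [le_div_iff₀ (by norm_num)]
    nlinarith [mul_le_mul_of_nonneg_left h h3.le, mul_inv_cancel₀ (ne_of_gt h3)]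
  have h0 : Real.exp (1.09:ℝ) = Real.exp 1 * Real.exp 0.09 := by
    rw [← Real.exp_add]; norm_num
  rw [h0]
  have h4 : (0:ℝ) < Real.exp 0.09 := Real.exp_pos _
  nlinarith

theorem aux_log_three : (1.09:ℝ) ≤ Real.log 3 := by
  rw [← Real.log_exp (1.09:ℝ)]
  exact Real.log_le_log (Real.exp_pos _) aux_exp_109

noncomputable def gg (t : ℝ) : ℝ :=
  (Real.log t) ^ ((3:ℝ)/5) * (Real.log (Real.log t)) ^ (-(1:ℝ)/5)

theorem aux_log_ge (t : ℝ) (ht : 3 ≤ t) : (1.09:ℝ) ≤ Real.log t :=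
  le_trans aux_log_three (Real.log_le_log (by norm_num) ht)

theorem aux_gg_nonneg (t : ℝ) (ht : 3 ≤ t) : 0 ≤ gg t := by
  have h := aux_log_ge t ht
  exact mul_nonneg (Real.rpow_nonneg (by linarith) _)
    (Real.rpow_nonneg (Real.log_nonneg (by linarith)) _)

theorem aux_sqrt_le_gg (t : ℝ) (ht : 3 ≤ t) : Real.sqrt (Real.log t) ≤ gg t := by
  set u := Real.log t with hu
  have hu1 : (1.09:ℝ) ≤ u := aux_log_ge t ht
  have hu0 : (0:ℝ) < u := by linarith
  have hlu : 0 < Real.log u := Real.log_pos (by linarith)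
  have hlsu : Real.log u ≤ Real.sqrt u := aux_log_le_sqrt u hu0.le
  have step1 : (Real.sqrt u) ^ (-(1:ℝ)/5) ≤ (Real.log u) ^ (-(1:ℝ)/5) :=
    Real.rpow_le_rpow_of_nonpos hlu hlsu (by norm_num)
  have key : Real.sqrt u = u ^ ((3:ℝ)/5) * (Real.sqrt u) ^ (-(1:ℝ)/5) := by
    rw [Real.sqrt_eq_rpow, ← Real.rpow_mul hu0.le, ← Real.rpow_add hu0]
    norm_num
  rw [gg, key]
  exact mul_le_mul_of_nonneg_left step1 (Real.rpow_nonneg hu0.le _)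

theorem aux_B (s t : ℝ) (hs : 3 ≤ s) (hst : s ≤ t) :
    gg s ≤ 4 * (gg t + Real.sqrt (Real.log t)) := by
  set v := Real.log s with hv
  set u := Real.log t with hu
  have hv1 : (1.09:ℝ) ≤ v := aux_log_ge s hs
  have hu1 : (1.09:ℝ) ≤ u := aux_log_ge t (le_trans hs hst)
  have hvu : v ≤ u := Real.log_le_log (by linarith) hst
  have hv0 : (0:ℝ) < v := by linarith
  have hu0 : (0:ℝ) < u := by linarith
  have hlv0 : 0 < Real.log v := Real.log_pos (by linarith)
  have hlu0 : 0 < Real.log u := Real.log_pos (by linarith)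
  have hsqrt : 0 ≤ Real.sqrt u := Real.sqrt_nonneg u
  rcases le_or_gt u (v^2) with hcase | hcase
  · have hlog : Real.log u ≤ 2 * Real.log v := by
      calc Real.log u ≤ Real.log (v^2) := Real.log_le_log hu0 hcase
      _ = 2 * Real.log v := by rw [Real.log_pow]; norm_num
    have h1 : (2 * Real.log v) ^ (-(1:ℝ)/5) ≤ (Real.log u) ^ (-(1:ℝ)/5) :=
      Real.rpow_le_rpow_of_nonpos hlu0 hlog (by norm_num)
    have h2 : (2 * Real.log v) ^ (-(1:ℝ)/5)
        = (2:ℝ) ^ (-(1:ℝ)/5) * (Real.log v) ^ (-(1:ℝ)/5) :=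
      Real.mul_rpow (by norm_num) hlv0.le
    have h3 : (1/4 : ℝ) ≤ (2:ℝ) ^ (-(1:ℝ)/5) := by
      have e1 : (2:ℝ) ^ ((-2):ℝ) = 1/4 := by
        rw [show ((-2):ℝ) = ((-2:ℤ):ℝ) by norm_num, Real.rpow_intCast]; norm_num
      rw [← e1]
      exact Real.rpow_le_rpow_of_exponent_le (by norm_num) (by norm_num)
    have h4 : v ^ ((3:ℝ)/5) ≤ u ^ ((3:ℝ)/5) := Real.rpow_le_rpow hv0.le hvu (by norm_num)
    have h5 : gg s ≤ 4 * gg t := by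
      have hgs : gg s = v ^ ((3:ℝ)/5) * (Real.log v) ^ (-(1:ℝ)/5) := rfl
      have hgt : gg t = u ^ ((3:ℝ)/5) * (Real.log u) ^ (-(1:ℝ)/5) := rfl
      rw [hgs, hgt]
      have p1 : 0 ≤ v ^ ((3:ℝ)/5) := Real.rpow_nonneg hv0.le _
      have p2 : 0 ≤ (Real.log v) ^ (-(1:ℝ)/5) := Real.rpow_nonneg hlv0.le _
      have p4 : 0 ≤ u ^ ((3:ℝ)/5) := Real.rpow_nonneg hu0.le _
      nlinarith [mul_le_mul h4 (le_trans (le_of_eq h2.symm) h1) (by positivity) p4,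
        mul_le_mul_of_nonneg_left (mul_le_mul_of_nonneg_right h3 p2) p1]
    have := aux_gg_nonneg t (le_trans hs hst)
    nlinarith
  · have hsq : v ≤ Real.sqrt u := by
      rw [show v = Real.sqrt (v^2) by rw [Real.sqrt_sq hv0.le]]
      exact Real.sqrt_le_sqrt (le_of_lt hcase)
    have hlv : (0.08:ℝ) ≤ Real.log v := by
      have h := Real.log_le_sub_one_of_pos (inv_pos.2 hv0)
      rw [Real.log_inv] at h
      have : v⁻¹ ≤ (1.09:ℝ)⁻¹ := by
        apply inv_anti₀ (by norm_num) hv1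
      nlinarith
    have hkey : (1/4:ℝ) ≤ v ^ ((2:ℝ)/5) * (Real.log v) ^ ((1:ℝ)/5) := by
      have hbase : (1/1024:ℝ) ≤ v^2 * Real.log v := by nlinarith
      have h5th : ((1/1024:ℝ)) ^ ((1:ℝ)/5) ≤ (v^2 * Real.log v) ^ ((1:ℝ)/5) :=
        Real.rpow_le_rpow (by norm_num) hbase (by norm_num)
      have e1 : ((1/1024:ℝ)) ^ ((1:ℝ)/5) = 1/4 := by
        rw [show (1/1024:ℝ) = (1/4:ℝ)^(5:ℕ) by norm_num, ← Real.rpow_natCast ((1/4:ℝ)) 5,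
          ← Real.rpow_mul (by norm_num)]
        norm_num
      have e2 : (v^2 * Real.log v) ^ ((1:ℝ)/5)
          = v ^ ((2:ℝ)/5) * (Real.log v) ^ ((1:ℝ)/5) := by
        rw [Real.mul_rpow (by positivity) hlv0.le, ← Real.rpow_natCast v 2,
          ← Real.rpow_mul hv0.le]
        norm_num
      rw [← e1, ← e2]; exact h5th
    have hprod : gg s * (v ^ ((2:ℝ)/5) * (Real.log v) ^ ((1:ℝ)/5)) = v := by
      have hgs : gg s = v ^ ((3:ℝ)/5) * (Real.log v) ^ (-(1:ℝ)/5) := rfl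
      rw [hgs]
      rw [show v ^ ((3:ℝ)/5) * (Real.log v) ^ (-(1:ℝ)/5)
            * (v ^ ((2:ℝ)/5) * (Real.log v) ^ ((1:ℝ)/5))
          = (v ^ ((3:ℝ)/5) * v ^ ((2:ℝ)/5))
            * ((Real.log v) ^ (-(1:ℝ)/5) * (Real.log v) ^ ((1:ℝ)/5)) by ring]
      rw [← Real.rpow_add hv0, ← Real.rpow_add hlv0]
      norm_num
    have hggs0 : 0 ≤ gg s := aux_gg_nonneg s hs
    have hggt0 : 0 ≤ gg t := aux_gg_nonneg t (le_trans hs hst)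
    nlinarith [hkey, hprod, hsq]

theorem aux_key (c s t : ℝ) (hc : 0 < c) (hs : 3 ≤ s) (hst : s ≤ t) :
    c/12 * gg s + c/3 * Real.sqrt (Real.log t) ≤ c * gg t := by
  have h1 := aux_B s t hs hst
  have h2 := aux_sqrt_le_gg t (hs.trans hst)
  nlinarith [mul_le_mul_of_nonneg_left h1 hc.le, mul_le_mul_of_nonneg_left h2 hc.le,
    Real.sqrt_nonneg (Real.log t)]

theorem aux_quartic (x : ℝ) (hx : 0 ≤ x) : x^4 ≤ 256 * Real.exp x := by
  have h1 : 1 + x/4 ≤ Real.exp (x/4) := by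
    have := Real.add_one_le_exp (x/4); linarith
  have h2 : (x/4)^4 ≤ (Real.exp (x/4))^4 := by
    apply pow_le_pow_left₀ (by positivity)
    linarith
  have h3 : (Real.exp (x/4))^4 = Real.exp x := by
    rw [← Real.exp_nat_mul]
    norm_num
    ring_nf
  nlinarith

theorem aux_summable_W (c : ℝ) (hc : 0 < c) :
    Summable (fun m : ℕ => Real.exp (-c * Real.sqrt (Real.log m)) / (m + 1)) := by
  set W : ℕ → ℝ := fun m => Real.exp (-c * Real.sqrt (Real.log m)) / (m + 1) with hW
  have hpos : ∀ m, 0 ≤ W m := fun m => by positivity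
  have hanti : ∀ ⦃m n : ℕ⦄, 0 < m → m ≤ n → W n ≤ W m := by
    intro m n hm hmn
    apply div_le_div₀ (by positivity)
    · apply Real.exp_le_exp.2
      have h : Real.log m ≤ Real.log n :=
        Real.log_le_log (by exact_mod_cast hm) (by exact_mod_cast hmn)
      nlinarith [mul_le_mul_of_nonneg_left (Real.sqrt_le_sqrt h) hc.le]
    · positivity
    · have : (m:ℝ) ≤ n := by exact_mod_cast hmn
      linarith
  rw [← summable_condensed_iff_of_nonneg hpos hanti]
  have hsum2 : Summable (fun k : ℕ => (256 / (c^4 * Real.log 2 ^2)) * (1/(k:ℝ)^2)) :=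
    Summable.mul_left _ (Real.summable_one_div_nat_pow.2 (by norm_num))
  apply Summable.of_norm_bounded_eventually_nat hsum2
  · filter_upwards [eventually_ge_atTop 1] with k hk
    have hlog2 : (0:ℝ) < Real.log 2 := Real.log_pos (by norm_num)
    have hk0 : (0:ℝ) < k := by exact_mod_cast hk
    have hlogpow : Real.log ((2:ℕ)^k : ℕ) = k * Real.log 2 := by
      push_cast
      rw [Real.log_pow]
    set x := c * Real.sqrt ((k:ℝ) * Real.log 2) with hxdef
    have hs2 : Real.sqrt ((k:ℝ) * Real.log 2) ^ 2 = (k:ℝ) * Real.log 2 :=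
      Real.sq_sqrt (by positivity)
    have hx : 0 < x := by positivity
    have hquart := aux_quartic x hx.le
    have hx4 : x^4 = c^4 * ((k:ℝ) * Real.log 2)^2 := by
      rw [hxdef, mul_pow, show Real.sqrt ((k:ℝ) * Real.log 2) ^ 4
        = (Real.sqrt ((k:ℝ) * Real.log 2) ^ 2)^2 by ring, hs2]
    have hexp : Real.exp (-x) ≤ 256 / (c^4 * ((k:ℝ) * Real.log 2)^2) := by
      rw [Real.exp_neg, le_div_iff₀ (by positivity), ← hx4]
      nlinarith [Real.exp_pos x,
        mul_le_mul_of_nonneg_left hquart (le_of_lt (inv_pos.2 (Real.exp_pos x))),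
        mul_inv_cancel₀ (ne_of_gt (Real.exp_pos x))]
    have hterm : (2:ℝ)^k * W (2^k) ≤ Real.exp (-x) := by
      have hcast : ((2^k : ℕ) : ℝ) = (2:ℝ)^k := by push_cast; ring
      have hWval : W (2^k) = Real.exp (-x) / ((2:ℝ)^k + 1) := by
        rw [hW]; simp only; rw [hlogpow, hcast, hxdef, neg_mul]
      rw [hWval]
      set E := Real.exp (-x) with hE
      have hE0 : 0 < E := Real.exp_pos _
      have h1 : (2:ℝ)^k * (E / ((2:ℝ)^k + 1)) = E * ((2:ℝ)^k / ((2:ℝ)^k + 1)) := by ring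
      have h2 : (2:ℝ)^k / ((2:ℝ)^k + 1) ≤ 1 := by
        rw [div_le_one (by positivity)]; linarith
      calc (2:ℝ)^k * (E / ((2:ℝ)^k + 1)) = E * ((2:ℝ)^k / ((2:ℝ)^k + 1)) := h1
        _ ≤ E * 1 := mul_le_mul_of_nonneg_left h2 hE0.le
        _ = E := mul_one E
    have hnn : 0 ≤ (2:ℝ)^k * W (2^k) := by positivity
    rw [Real.norm_eq_abs, abs_of_nonneg hnn]
    calc (2:ℝ)^k * W (2^k) ≤ Real.exp (-x) := hterm
      _ ≤ 256 / (c^4 * ((k:ℝ) * Real.log 2)^2) := hexp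
      _ = 256 / (c^4 * Real.log 2 ^2) * (1/(k:ℝ)^2) := by
          rw [div_eq_mul_inv, div_eq_mul_inv, mul_pow, mul_inv]
          ring

theorem aux_abel (a : ℕ → ℝ) (K : ℕ) (hK : 1 ≤ K) (N : ℕ) (hN : K + 1 ≤ N) :
    ∑ m ∈ Ioc K N, a m / m
      = (∑ j ∈ Icc 1 N, a j)/N - (∑ j ∈ Icc 1 K, a j)/(K+1)
        + ∑ m ∈ Ico (K+1) N, (∑ j ∈ Icc 1 m, a j) / (m * (m+1)) := by
  induction N, hN using Nat.le_induction with
  | base =>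
    rw [Finset.sum_Ioc_succ_top (le_refl K), Finset.Ioc_self, Finset.sum_empty,
      Finset.Ico_self, Finset.sum_empty,
      Finset.sum_Icc_succ_top (by omega : 1 ≤ K + 1)]
    have hK0 : ((K:ℝ) + 1) ≠ 0 := by positivity
    push_cast
    field_simp
    ring
  | succ N hN IH =>
    have hKN : K ≤ N := by omega
    have hN0 : (0:ℝ) < N := by
      have : (1:ℕ) ≤ N := by omega
      exact_mod_cast Nat.lt_of_lt_of_le Nat.zero_lt_one this
    have hN10 : (0:ℝ) < (N:ℝ) + 1 := by linarith
    rw [Finset.sum_Ioc_succ_top (by omega : K ≤ N), IH,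
      Finset.sum_Ico_succ_top (by omega : K + 1 ≤ N),
      Finset.sum_Icc_succ_top (by omega : 1 ≤ N + 1)]
    push_cast
    field_simp
    ring

set_option maxHeartbeats 2000000 in
theorem moebius_tail_bound
    (A C₀ : ℝ) (hA : 0 < A) (hC₀ : 0 < C₀)
    (hM : ∀ x : ℝ, 3 ≤ x →
      |∑ n ∈ Icc 1 ⌊x⌋₊, ((μ n : ℤ) : ℝ)| ≤
        A * x * Real.exp (-C₀ * (Real.log x) ^ ((3:ℝ)/5) * (Real.log (Real.log x)) ^ (-(1:ℝ)/5))) :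
    ∃ C > (0:ℝ), ∃ B > (0:ℝ), ∀ y : ℝ, 3 ≤ y →
      ∃ L : ℝ, Tendsto (fun N : ℕ => ∑ m ∈ Ioc ⌊y⌋₊ N, ((μ m : ℤ) : ℝ) / m) atTop (nhds L) ∧
        |L| ≤ B * Real.exp (-C * (Real.log y) ^ ((3:ℝ)/5) * (Real.log (Real.log y)) ^ (-(1:ℝ)/5)) := by
  set a : ℕ → ℝ := fun m => ((μ m : ℤ) : ℝ) with ha
  set S : ℕ → ℝ := fun n => ∑ j ∈ Icc 1 n, a j with hSdef
  have hM' : ∀ x : ℝ, 3 ≤ x → |S ⌊x⌋₊| ≤ A * x * Real.exp (-(C₀ * gg x)) := by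
    intro x hx
    have h := hM x hx
    rwa [show -C₀ * (Real.log x) ^ ((3:ℝ)/5) * (Real.log (Real.log x)) ^ (-(1:ℝ)/5)
      = -(C₀ * gg x) by rw [gg]; ring] at h
  have hMn : ∀ n : ℕ, 3 ≤ n → |S n| ≤ A * n * Real.exp (-(C₀ * gg n)) := by
    intro n hn
    have h3 : (3:ℝ) ≤ (n:ℝ) := by exact_mod_cast hn
    have h := hM' n h3
    rwa [Nat.floor_natCast] at h
  -- the comparison weight
  set W : ℕ → ℝ := fun m => Real.exp (-(C₀/3) * Real.sqrt (Real.log m)) / (m + 1) with hWdef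
  have hWsum : Summable W := aux_summable_W (C₀/3) (by positivity)
  have hW0 : ∀ m, 0 ≤ W m := fun m => by positivity
  have hWt0 : 0 ≤ ∑' m, W m := tsum_nonneg hW0
  -- bound on |S m| / (m (m+1)) for m ≥ 3
  set hseq : ℕ → ℝ := fun m => S m / (m * (m + 1)) with hhseq
  have hseq_bound : ∀ m : ℕ, 3 ≤ m → |hseq m| ≤ A * (Real.exp (-(C₀ * gg m)) / (m + 1)) := by
    intro m hm
    have hm0 : (0:ℝ) < m := by exact_mod_cast Nat.lt_of_lt_of_le (by norm_num) hm
    have hm10 : (0:ℝ) < (m:ℝ) + 1 := by linarith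
    have h1 := hMn m hm
    have : |hseq m| = |S m| / (m * (m + 1)) := by
      rw [hhseq]; simp only
      rw [abs_div, abs_of_nonneg (by positivity : (0:ℝ) ≤ (m:ℝ) * ((m:ℝ)+1))]
    rw [this]
    rw [div_le_iff₀ (by positivity)]
    calc |S m| ≤ A * m * Real.exp (-(C₀ * gg m)) := h1
      _ = A * (Real.exp (-(C₀ * gg m)) / (m + 1)) * (m * (m + 1)) := by
          field_simp
  have hexp_gg_sqrt : ∀ m : ℕ, 3 ≤ m →
      Real.exp (-(C₀ * gg m)) ≤ Real.exp (-(C₀/3) * Real.sqrt (Real.log m)) := by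
    intro m hm
    have h3 : (3:ℝ) ≤ (m:ℝ) := by exact_mod_cast hm
    have h := aux_sqrt_le_gg m h3
    have hs := Real.sqrt_nonneg (Real.log (m:ℝ))
    apply Real.exp_le_exp.2
    nlinarith
  have hseq_boundW : ∀ m : ℕ, 3 ≤ m → |hseq m| ≤ A * W m := by
    intro m hm
    calc |hseq m| ≤ A * (Real.exp (-(C₀ * gg m)) / (m + 1)) := hseq_bound m hm
      _ ≤ A * W m := by
          have hWm : W m = Real.exp (-(C₀/3) * Real.sqrt (Real.log m)) / ((m:ℝ) + 1) := rfl
          rw [hWm]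
          gcongr
          exact Real.exp_le_exp.1 (hexp_gg_sqrt m hm)
  have hseqSummable : Summable hseq := by
    apply Summable.of_norm_bounded_eventually_nat (hWsum.mul_left A)
    filter_upwards [eventually_ge_atTop 3] with m hm
    rw [Real.norm_eq_abs]
    exact hseq_boundW m hm
  -- choose constants
  refine ⟨C₀/12, by positivity, A * (2 + ∑' m, W m), by nlinarith, fun y hy => ?_⟩
  set K := ⌊y⌋₊ with hK
  have hK3 : 3 ≤ K := Nat.le_floor (by exact_mod_cast hy)
  have hK1 : 1 ≤ K := by omega
  have hKy : (K:ℝ) ≤ y := Nat.floor_le (by linarith)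
  have hyK1 : y < (K:ℝ) + 1 := Nat.lt_floor_add_one y
  set EC : ℝ := Real.exp (-(C₀/12 * gg y)) with hEC
  have hEC0 : 0 < EC := Real.exp_pos _
  have hggy0 : 0 ≤ gg y := aux_gg_nonneg y hy
  -- key exponential comparison for n ≥ K+1
  have hKey : ∀ n : ℕ, K + 1 ≤ n →
      Real.exp (-(C₀ * gg n)) ≤ EC * Real.exp (-(C₀/3 * Real.sqrt (Real.log n))) := by
    intro n hn
    have hyn : y ≤ (n:ℝ) := by
      have : ((K:ℝ) + 1) ≤ (n:ℝ) := by exact_mod_cast hn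
      linarith
    rw [hEC, ← Real.exp_add]
    apply Real.exp_le_exp.2
    have := aux_key C₀ y n hC₀ hy hyn
    linarith
  -- bound on each hseq term for m ≥ K+1
  have hterm : ∀ m : ℕ, K + 1 ≤ m → |hseq m| ≤ A * EC * W m := by
    intro m hm
    have hm3 : 3 ≤ m := by omega
    calc |hseq m| ≤ A * (Real.exp (-(C₀ * gg m)) / (m + 1)) := hseq_bound m hm3
      _ ≤ A * ((EC * Real.exp (-(C₀/3 * Real.sqrt (Real.log m)))) / (m + 1)) := by
          gcongr
          exact hKey m hm
      _ = A * EC * W m := by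
          rw [hWdef]
          simp only
          rw [show -(C₀/3) * Real.sqrt (Real.log m) = -(C₀/3 * Real.sqrt (Real.log m)) by ring]
          ring
  -- uniform bound for partial Abel sums, N ≥ K+1
  have hTbound : ∀ N : ℕ, K + 1 ≤ N →
      |∑ m ∈ Ioc K N, a m / m| ≤ A * (2 + ∑' m, W m) * EC := by
    intro N hN
    rw [aux_abel a K hK1 N hN]
    have hN3 : 3 ≤ N := by omega
    have hN0 : (0:ℝ) < N := by exact_mod_cast Nat.lt_of_lt_of_le (by norm_num) hN3
    -- piece 1
    have p1 : |S N / N| ≤ A * EC := by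
      rw [abs_div, abs_of_nonneg hN0.le, div_le_iff₀ hN0]
      calc |S N| ≤ A * N * Real.exp (-(C₀ * gg N)) := hMn N hN3
        _ ≤ A * N * (EC * Real.exp (-(C₀/3 * Real.sqrt (Real.log N)))) := by
            gcongr
            exact hKey N hN
        _ ≤ A * N * (EC * 1) := by
            gcongr
            exact Real.exp_le_one_iff.2 (neg_nonpos.2 (by positivity))
        _ = A * EC * N := by ring
    -- piece 2
    have p2 : |S K / ((K:ℝ) + 1)| ≤ A * EC := by
      have hden : (0:ℝ) < (K:ℝ) + 1 := by positivity
      rw [abs_div, abs_of_nonneg hden.le, div_le_iff₀ hden]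
      have hfloor : (⌊y⌋₊ : ℕ) = K := hK.symm
      have h1 : |S K| ≤ A * y * Real.exp (-(C₀ * gg y)) := by
        have := hM' y hy
        rwa [← hK] at this
      calc |S K| ≤ A * y * Real.exp (-(C₀ * gg y)) := h1
        _ ≤ A * y * EC := by
            have he : Real.exp (-(C₀ * gg y)) ≤ EC := by
              rw [hEC]
              apply Real.exp_le_exp.2
              nlinarith
            have hy0 : (0:ℝ) < y := by linarith
            have h2 := mul_le_mul_of_nonneg_left he (by positivity : (0:ℝ) ≤ A * y)
            linarith [h2]
        _ ≤ A * ((K:ℝ) + 1) * EC := by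
            have h3 : A * y ≤ A * ((K:ℝ) + 1) := mul_le_mul_of_nonneg_left hyK1.le hA.le
            have h4 := mul_le_mul_of_nonneg_right h3 hEC0.le
            linarith [h4]
        _ = A * EC * ((K:ℝ) + 1) := by ring
    -- piece 3
    have p3 : |∑ m ∈ Ico (K+1) N, hseq m| ≤ A * EC * ∑' m, W m := by
      calc |∑ m ∈ Ico (K+1) N, hseq m| ≤ ∑ m ∈ Ico (K+1) N, |hseq m| :=
            Finset.abs_sum_le_sum_abs _ _
        _ ≤ ∑ m ∈ Ico (K+1) N, A * EC * W m := by
            apply Finset.sum_le_sum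
            intro m hm
            exact hterm m (Finset.mem_Ico.1 hm).1
        _ = A * EC * ∑ m ∈ Ico (K+1) N, W m := by rw [Finset.mul_sum]
        _ ≤ A * EC * ∑' m, W m := by
            gcongr
            exact hWsum.sum_le_tsum _ (fun m _ => hW0 m)
    have hsub : |S N / N - S K / ((K:ℝ)+1)| ≤ |S N / N| + |S K / ((K:ℝ)+1)| := by
      rw [sub_eq_add_neg]
      exact (abs_add_le _ _).trans (by rw [abs_neg])
    have habs : |S N / N - S K / ((K:ℝ)+1) + ∑ m ∈ Ico (K+1) N, hseq m|
        ≤ |S N / N| + |S K / ((K:ℝ)+1)| + |∑ m ∈ Ico (K+1) N, hseq m| := by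
      calc |S N / N - S K / ((K:ℝ)+1) + ∑ m ∈ Ico (K+1) N, hseq m|
          ≤ |S N / N - S K / ((K:ℝ)+1)| + |∑ m ∈ Ico (K+1) N, hseq m| := abs_add_le _ _
        _ ≤ |S N / N| + |S K / ((K:ℝ)+1)| + |∑ m ∈ Ico (K+1) N, hseq m| := by linarith
    have expand : A * (2 + ∑' m, W m) * EC = A*EC + A*EC + A*EC*(∑' m, W m) := by ring
    show |S N / N - S K / ((K:ℝ)+1) + ∑ m ∈ Ico (K+1) N, hseq m| ≤ A * (2 + ∑' m, W m) * EC
    linarith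
  -- the limit
  set P : ℝ := ∑ m ∈ range (K+1), hseq m with hP
  set L : ℝ := 0 - S K/((K:ℝ)+1) + ((∑' m, hseq m) - P) with hL
  have tend1 : Tendsto (fun N : ℕ => S N / N) atTop (nhds 0) := by
    apply squeeze_zero_norm' (a := fun N : ℕ => A * Real.exp (-(C₀/3) * Real.sqrt (Real.log N)))
    · filter_upwards [eventually_ge_atTop 3] with N hN
      have hN0 : (0:ℝ) < N := by exact_mod_cast Nat.lt_of_lt_of_le (by norm_num) hN
      rw [Real.norm_eq_abs, abs_div, abs_of_nonneg hN0.le, div_le_iff₀ hN0]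
      calc |S N| ≤ A * N * Real.exp (-(C₀ * gg N)) := hMn N hN
        _ ≤ A * N * Real.exp (-(C₀/3) * Real.sqrt (Real.log N)) := by
            gcongr
            exact Real.exp_le_exp.1 (hexp_gg_sqrt N hN)
        _ = A * Real.exp (-(C₀/3) * Real.sqrt (Real.log N)) * N := by ring
    · have t1 : Tendsto (fun N : ℕ => Real.sqrt (Real.log N)) atTop atTop := by
        have hsq : Tendsto Real.sqrt atTop atTop := by
          rw [show Real.sqrt = fun x : ℝ => x ^ (1/2:ℝ) from funext fun x => Real.sqrt_eq_rpow x]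
          exact tendsto_rpow_atTop (by norm_num)
        exact hsq.comp (Real.tendsto_log_atTop.comp tendsto_natCast_atTop_atTop)
      have t2 : Tendsto (fun N : ℕ => -(C₀/3) * Real.sqrt (Real.log N)) atTop atBot := by
        have := tendsto_neg_atTop_atBot.comp (t1.const_mul_atTop (by positivity : (0:ℝ) < C₀/3))
        apply this.congr
        intro N
        simp [Function.comp, neg_mul]
      have t3 : Tendsto (fun N : ℕ => Real.exp (-(C₀/3) * Real.sqrt (Real.log N)))
          atTop (nhds 0) := Real.tendsto_exp_atBot.comp t2
      have t4 := t3.const_mul A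
      simpa using t4
  have tendIco : Tendsto (fun N : ℕ => ∑ m ∈ Ico (K+1) N, hseq m) atTop
      (nhds ((∑' m, hseq m) - P)) := by
    have t4 := hseqSummable.hasSum.tendsto_sum_nat
    have t5 : Tendsto (fun N : ℕ => (∑ m ∈ range N, hseq m) - P) atTop
        (nhds ((∑' m, hseq m) - P)) := t4.sub_const P
    apply t5.congr'
    filter_upwards [eventually_ge_atTop (K+1)] with N hN
    rw [hP, Finset.sum_Ico_eq_sub _ hN]
  have tendRHS : Tendsto (fun N : ℕ => S N/N - S K/((K:ℝ)+1) + ∑ m ∈ Ico (K+1) N, hseq m)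
      atTop (nhds L) := by
    rw [hL]
    exact ((tend1.sub_const _).add tendIco)
  have tendT : Tendsto (fun N : ℕ => ∑ m ∈ Ioc K N, a m / m) atTop (nhds L) := by
    apply tendRHS.congr'
    filter_upwards [eventually_ge_atTop (K+1)] with N hN
    exact (aux_abel a K hK1 N hN).symm
  refine ⟨L, tendT, ?_⟩
  have hLb : |L| ≤ A * (2 + ∑' m, W m) * EC := by
    apply le_of_tendsto tendT.abs
    filter_upwards [eventually_ge_atTop (K+1)] with N hN
    exact hTbound N hN
  rw [show -(C₀/12) * (Real.log y) ^ ((3:ℝ)/5) * (Real.log (Real.log y)) ^ (-(1:ℝ)/5)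
    = -(C₀/12 * gg y) by rw [gg]; ring]
  exact hLb
end

section
/- Let t : ℕ → ℝ satisfy the identity t(n^2) = ∑_{d|n} μ(d) t(n/d)^2 for all n ≥ 1, and suppose there are constants K > 0 and 0 < β < 1 with |∑_{n ≤ y} t(n)^2 - K*y| ≤ y^β for all y ≥ 1. Assume further that there exist constants A, C₀ > 0 with |∑_{n ≤ x} μ(n)| ≤ A*x*exp(-C₀*(log x)^{3/5}*(log log x)^{-1/5}) for x ≥ 3. Then there exist constants B, C > 0 such that |∑_{n ≤ x} t(n^2)| ≤ B * (K+1) * x * exp(-C*(log x)^{3/5}*(log log x)^{-1/5}) for all x ≥ 3. -/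
open Finset ArithmeticFunction
open scoped ArithmeticFunction.Moebius

lemma swapFull (N : ℕ) (g : ℕ → ℕ → ℝ) :
    ∑ n ∈ Icc 1 N, ∑ d ∈ n.divisors, g d (n / d)
      = ∑ d ∈ Icc 1 N, ∑ m ∈ Icc 1 (N / d), g d m := by
  have h1 : ∑ n ∈ Icc 1 N, ∑ d ∈ n.divisors, g d (n / d)
      = ∑ n ∈ Icc 1 N, ∑ p ∈ n.divisorsAntidiagonal, g p.1 p.2 := by
    refine Finset.sum_congr rfl fun n _ => ?_
    exact (Nat.sum_divisorsAntidiagonal g).symm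
  rw [h1]
  rw [← Finset.sum_biUnion]
  · have h2 : (Icc 1 N).biUnion (fun n => n.divisorsAntidiagonal)
        = (Icc 1 N ×ˢ Icc 1 N).filter (fun p => p.1 * p.2 ≤ N) := by
      ext p
      simp only [Finset.mem_biUnion, Nat.mem_divisorsAntidiagonal, Finset.mem_filter,
        Finset.mem_product, Finset.mem_Icc]
      constructor
      · rintro ⟨n, hn, rfl, hne⟩
        obtain ⟨h1ne, h2ne⟩ := Nat.mul_ne_zero_iff.1 hne
        have h1p : 1 ≤ p.1 := Nat.pos_of_ne_zero h1ne
        have h2p : 1 ≤ p.2 := Nat.pos_of_ne_zero h2ne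
        refine ⟨⟨⟨h1p, le_trans (Nat.le_mul_of_pos_right _ h2p) hn.2⟩,
          ⟨h2p, le_trans (Nat.le_mul_of_pos_left _ h1p) hn.2⟩⟩, hn.2⟩
      · rintro ⟨⟨⟨h1p, -⟩, ⟨h2p, -⟩⟩, hle⟩
        exact ⟨p.1 * p.2, ⟨Nat.one_le_iff_ne_zero.2
          (Nat.mul_ne_zero (by omega) (by omega)), hle⟩, rfl,
          Nat.mul_ne_zero (by omega) (by omega)⟩
    rw [h2, Finset.sum_filter, Finset.sum_product]
    refine Finset.sum_congr rfl fun d hd => ?_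
    rw [← Finset.sum_filter]
    have hd1 : 1 ≤ d := (Finset.mem_Icc.1 hd).1
    have h3 : (Icc 1 N).filter (fun m => d * m ≤ N) = Icc 1 (N / d) := by
      ext a
      simp only [Finset.mem_filter, Finset.mem_Icc, Nat.le_div_iff_mul_le hd1]
      constructor
      · rintro ⟨⟨h1a, -⟩, h⟩; exact ⟨h1a, by rwa [mul_comm d a] at h⟩
      · rintro ⟨h1a, h⟩
        exact ⟨⟨h1a, le_trans (Nat.le_mul_of_pos_right a hd1) h⟩,
          by rwa [mul_comm a d] at h⟩
    rw [h3]
  · intro a _ b _ hab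
    simp only [Finset.disjoint_left]
    intro p hpa hpb
    rw [Nat.mem_divisorsAntidiagonal] at hpa hpb
    exact hab (hpa.1.symm.trans hpb.1)

lemma swapTail (a N : ℕ) (f w : ℕ → ℝ) :
    ∑ d ∈ Ioc a N, f d * ∑ m ∈ Icc 1 (N / d), w m
      = ∑ m ∈ Icc 1 (N / (a + 1)), (∑ d ∈ Ioc a (N / m), f d) * w m := by
  have key : ∀ d ∈ Ioc a N, f d * ∑ m ∈ Icc 1 (N / d), w m
      = ∑ m ∈ Icc 1 N, if d * m ≤ N then f d * w m else 0 := by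
    intro d hd
    have hd1 : 1 ≤ d := by have := (Finset.mem_Ioc.1 hd).1; omega
    rw [Finset.mul_sum, ← Finset.sum_filter]
    have h3 : (Icc 1 N).filter (fun m => d * m ≤ N) = Icc 1 (N / d) := by
      ext m
      simp only [Finset.mem_filter, Finset.mem_Icc, Nat.le_div_iff_mul_le hd1]
      constructor
      · rintro ⟨⟨h1a, -⟩, h⟩; exact ⟨h1a, by rwa [mul_comm d m] at h⟩
      · rintro ⟨h1a, h⟩
        exact ⟨⟨h1a, le_trans (Nat.le_mul_of_pos_right m hd1) h⟩,
          by rwa [mul_comm m d] at h⟩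
    rw [h3]
  rw [Finset.sum_congr rfl key, Finset.sum_comm]
  have key2 : ∀ m, 1 ≤ m → (∑ d ∈ Ioc a N, if d * m ≤ N then f d * w m else 0)
      = (∑ d ∈ Ioc a (N / m), f d) * w m := by
    intro m hm
    rw [← Finset.sum_filter]
    have h4 : (Ioc a N).filter (fun d => d * m ≤ N) = Ioc a (N / m) := by
      ext d
      simp only [Finset.mem_filter, Finset.mem_Ioc, Nat.le_div_iff_mul_le hm]
      constructor
      · rintro ⟨⟨h1, -⟩, h⟩; exact ⟨h1, h⟩
      · rintro ⟨h1, h⟩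
        exact ⟨⟨h1, le_trans (Nat.le_mul_of_pos_right d hm) h⟩, h⟩
    rw [h4, Finset.sum_mul]
  have sub : Icc 1 (N / (a+1)) ⊆ Icc 1 N := Finset.Icc_subset_Icc_right (Nat.div_le_self _ _)
  rw [← Finset.sum_subset sub]
  · refine Finset.sum_congr rfl fun m hm => ?_
    exact key2 m (Finset.mem_Icc.1 hm).1
  · intro m hm hnot
    have hm1 : 1 ≤ m := (Finset.mem_Icc.1 hm).1
    rw [key2 m hm1]
    have : N / m ≤ a := by
      simp only [Finset.mem_Icc, not_and, not_le] at hnot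
      have h5 := hnot hm1
      by_contra hc
      push_neg at hc
      have h6 : (a+1) * m ≤ N :=
        le_trans (Nat.le_div_iff_mul_le hm1 |>.1 hc) (le_refl N)
      have h7 : m ≤ N / (a+1) :=
        Nat.le_div_iff_mul_le (by omega) |>.2 (by rwa [mul_comm m (a+1)])
      omega
    rw [Finset.Ioc_eq_empty (by omega), Finset.sum_empty, zero_mul]

lemma moebius_divisors_sum (n : ℕ) :
    ∑ d ∈ n.divisors, ((μ d : ℤ) : ℝ) = if n = 1 then 1 else 0 := by
  have h : ∑ d ∈ n.divisors, μ d = (1 : ArithmeticFunction ℤ) n := by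
    rw [← moebius_mul_coe_zeta, coe_mul_zeta_apply]
  calc ∑ d ∈ n.divisors, ((μ d : ℤ) : ℝ)
      = ((∑ d ∈ n.divisors, μ d : ℤ) : ℝ) := by push_cast; ring
    _ = (((1 : ArithmeticFunction ℤ) n : ℤ) : ℝ) := by rw [h]
    _ = if n = 1 then 1 else 0 := by rw [one_apply]; split <;> simp

lemma sum_ite_one (N : ℕ) (hN : 1 ≤ N) :
    ∑ n ∈ Icc 1 N, (if n = 1 then (1:ℝ) else 0) = 1 := by
  rw [Finset.sum_ite_eq' (Icc 1 N) 1 (fun _ => (1:ℝ))]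
  simp [hN]

lemma harmonic_le_log (M : ℕ) (hM : 1 ≤ M) :
    ∑ j ∈ Ico 1 M, (1:ℝ)/(j+1) ≤ Real.log M := by
  have key : ∀ i : ℕ, (1:ℝ)/((i+1)+1) ≤ Real.log (i+1+1) - Real.log (i+1) := by
    intro i
    have h1 : (0:ℝ) < i + 1 := by positivity
    have h2 : (0:ℝ) < i + 1 + 1 := by positivity
    have h3 := Real.log_le_sub_one_of_pos (show (0:ℝ) < (i+1)/(i+1+1) by positivity)
    rw [Real.log_div (by positivity) (by positivity)] at h3
    have h4 : ((i:ℝ)+1)/(i+1+1) - 1 = -(1/(i+1+1)) := by field_simp; ring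
    rw [h4] at h3
    linarith
  calc ∑ j ∈ Ico 1 M, (1:ℝ)/(j+1)
      = ∑ i ∈ range (M - 1), (1:ℝ)/((1+i)+1) := by
        rw [Finset.sum_Ico_eq_sum_range]
        refine Finset.sum_congr rfl fun i _ => ?_
        push_cast; ring_nf
    _ ≤ ∑ i ∈ range (M - 1), (Real.log (i+1+1) - Real.log (i+1)) := by
        refine Finset.sum_le_sum fun i _ => ?_
        have := key i
        have he : ((1:ℝ)+i)+1 = (i+1)+1 := by ring
        rw [he]
        exact this
    _ = Real.log (((M - 1 : ℕ):ℝ) + 1) := by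
        have := Finset.sum_range_sub (f := fun i : ℕ => Real.log (i+1)) (n := M - 1)
        simpa using this
    _ ≤ Real.log M := by
        have hc : ((M - 1 : ℕ) : ℝ) + 1 = (M:ℝ) := by
          have h1 : (1:ℕ) ≤ M := hM
          push_cast [Nat.cast_sub h1]
          ring
        rw [hc]

lemma abel_ident (w : ℕ → ℝ) (M : ℕ) :
    ∑ m ∈ Icc 1 M, w m / m
      = (∑ m ∈ Icc 1 M, w m) / M
        + ∑ j ∈ Ico 1 M, (∑ m ∈ Icc 1 j, w m) * (1/j - 1/(j+1)) := by
  induction M with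
  | zero => simp
  | succ M ih =>
    rcases Nat.eq_zero_or_pos M with rfl | hM
    · simp
    · have hMR : (0:ℝ) < M := by exact_mod_cast hM
      have hM1R : (0:ℝ) < (M:ℝ) + 1 := by positivity
      rw [Finset.sum_Icc_succ_top (by omega : 1 ≤ M + 1),
          Finset.sum_Icc_succ_top (by omega : 1 ≤ M + 1),
          Finset.sum_Ico_succ_top (by omega : 1 ≤ M), ih]
      push_cast
      field_simp
      ring

noncomputable def ellF (x : ℝ) : ℝ :=
  Real.log x ^ ((3:ℝ)/5) * Real.log (Real.log x) ^ (-(1:ℝ)/5)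

lemma log_three_gt_one : (1:ℝ) < Real.log 3 := by
  have h := Real.exp_one_lt_d9
  have : Real.exp 1 < 3 := by linarith
  calc (1:ℝ) = Real.log (Real.exp 1) := by rw [Real.log_exp]
    _ < Real.log 3 := Real.log_lt_log (Real.exp_pos 1) this

lemma loglog_pos {x : ℝ} (hx : 3 ≤ x) : 0 < Real.log (Real.log x) := by
  have h1 : (1:ℝ) < Real.log x := lt_of_lt_of_le log_three_gt_one (Real.log_le_log (by norm_num) hx)
  exact Real.log_pos h1

lemma log_gt_one {x : ℝ} (hx : 3 ≤ x) : 1 < Real.log x :=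
  lt_of_lt_of_le log_three_gt_one (Real.log_le_log (by norm_num) hx)

lemma ellF_nonneg {x : ℝ} (hx : 3 ≤ x) : 0 ≤ ellF x := by
  unfold ellF
  have h1 := log_gt_one hx
  have h2 := loglog_pos hx
  positivity

lemma ellF_compare {c x y : ℝ} (hc0 : 0 < c) (hy : 3 ≤ y) (hyx : y ≤ x)
    (hlog : c * Real.log x ≤ Real.log y) : c ^ ((3:ℝ)/5) * ellF x ≤ ellF y := by
  have hly : 1 < Real.log y := log_gt_one hy
  have hlx : 1 < Real.log x := log_gt_one (le_trans hy hyx)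
  have hlly : 0 < Real.log (Real.log y) := loglog_pos hy
  have hll_le : Real.log (Real.log y) ≤ Real.log (Real.log x) :=
    Real.log_le_log (by linarith) (Real.log_le_log (by linarith) hyx)
  have pieceA : (c * Real.log x) ^ ((3:ℝ)/5) ≤ (Real.log y) ^ ((3:ℝ)/5) :=
    Real.rpow_le_rpow (by positivity) hlog (by norm_num)
  have pieceA' : (c * Real.log x) ^ ((3:ℝ)/5) = c ^ ((3:ℝ)/5) * (Real.log x) ^ ((3:ℝ)/5) :=
    Real.mul_rpow hc0.le (by positivity)
  have pieceB : (Real.log (Real.log x)) ^ (-(1:ℝ)/5) ≤ (Real.log (Real.log y)) ^ (-(1:ℝ)/5) :=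
    Real.rpow_le_rpow_of_nonpos hlly hll_le (by norm_num)
  unfold ellF
  calc c ^ ((3:ℝ)/5) * (Real.log x ^ ((3:ℝ)/5) * Real.log (Real.log x) ^ (-(1:ℝ)/5))
      = ((c * Real.log x) ^ ((3:ℝ)/5)) * Real.log (Real.log x) ^ (-(1:ℝ)/5) := by
        rw [pieceA']; ring
    _ ≤ (Real.log y ^ ((3:ℝ)/5)) * Real.log (Real.log y) ^ (-(1:ℝ)/5) := by
        have hllx : 0 < Real.log (Real.log x) := loglog_pos (le_trans hy hyx)
        refine mul_le_mul pieceA pieceB (Real.rpow_nonneg hllx.le _) (by positivity)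

lemma ellF_le_log {x : ℝ} (hee : Real.exp (Real.exp 1) ≤ x) : ellF x ≤ Real.log x := by
  have he1 : (1:ℝ) ≤ Real.exp 1 := by have := Real.exp_one_gt_d9; linarith
  have hx1 : (1:ℝ) < x := lt_of_lt_of_le (by
    calc (1:ℝ) < Real.exp 1 := by have := Real.exp_one_gt_d9; linarith
      _ ≤ Real.exp (Real.exp 1) := Real.exp_le_exp.2 he1) hee
  have hlx : Real.exp 1 ≤ Real.log x := by
    calc Real.exp 1 = Real.log (Real.exp (Real.exp 1)) := (Real.log_exp _).symm
      _ ≤ Real.log x := Real.log_le_log (Real.exp_pos _) hee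
  have hlx1 : (1:ℝ) ≤ Real.log x := le_trans he1 hlx
  have hll1 : (1:ℝ) ≤ Real.log (Real.log x) := by
    calc (1:ℝ) = Real.log (Real.exp 1) := (Real.log_exp 1).symm
      _ ≤ Real.log (Real.log x) := Real.log_le_log (Real.exp_pos 1) hlx
  have hB : (Real.log (Real.log x)) ^ (-(1:ℝ)/5) ≤ 1 :=
    Real.rpow_le_one_of_one_le_of_nonpos hll1 (by norm_num)
  have hA : (Real.log x) ^ ((3:ℝ)/5) ≤ Real.log x := by
    calc (Real.log x) ^ ((3:ℝ)/5) ≤ (Real.log x) ^ ((1:ℝ)) :=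
          Real.rpow_le_rpow_of_exponent_le hlx1 (by norm_num)
      _ = Real.log x := Real.rpow_one _
  unfold ellF
  calc Real.log x ^ ((3:ℝ)/5) * Real.log (Real.log x) ^ (-(1:ℝ)/5)
      ≤ Real.log x ^ ((3:ℝ)/5) * 1 := by
        refine mul_le_mul_of_nonneg_left hB (by positivity)
    _ = Real.log x ^ ((3:ℝ)/5) := mul_one _
    _ ≤ Real.log x := hA

lemma rpow_le_ellF {x : ℝ} (hx : 3 ≤ x) : (Real.log x) ^ ((2:ℝ)/5) ≤ ellF x := by
  have hlx : 1 < Real.log x := log_gt_one hx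
  have hll : 0 < Real.log (Real.log x) := loglog_pos hx
  have hle : Real.log (Real.log x) ≤ Real.log x := by
    have := Real.log_le_sub_one_of_pos (show (0:ℝ) < Real.log x by linarith)
    linarith
  have hB : (Real.log x) ^ (-(1:ℝ)/5) ≤ (Real.log (Real.log x)) ^ (-(1:ℝ)/5) :=
    Real.rpow_le_rpow_of_nonpos hll hle (by norm_num)
  unfold ellF
  calc (Real.log x) ^ ((2:ℝ)/5)
      = (Real.log x) ^ ((3:ℝ)/5) * (Real.log x) ^ (-(1:ℝ)/5) := by
        rw [← Real.rpow_add (by linarith : (0:ℝ) < Real.log x)]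
        norm_num
    _ ≤ (Real.log x) ^ ((3:ℝ)/5) * (Real.log (Real.log x)) ^ (-(1:ℝ)/5) := by
        refine mul_le_mul_of_nonneg_left hB (by positivity)

lemma ellF_upper_small {x x₀ : ℝ} (h3 : 3 ≤ x) (hx : x ≤ x₀) :
    ellF x ≤ Real.log x₀ ^ ((3:ℝ)/5) * Real.log (Real.log 3) ^ (-(1:ℝ)/5) := by
  have hlx : 1 < Real.log x := log_gt_one h3
  have hll3 : 0 < Real.log (Real.log 3) := loglog_pos (le_refl 3)
  have hA : (Real.log x) ^ ((3:ℝ)/5) ≤ (Real.log x₀) ^ ((3:ℝ)/5) :=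
    Real.rpow_le_rpow (by linarith) (Real.log_le_log (by linarith) hx) (by norm_num)
  have hB : (Real.log (Real.log x)) ^ (-(1:ℝ)/5) ≤ (Real.log (Real.log 3)) ^ (-(1:ℝ)/5) := by
    refine Real.rpow_le_rpow_of_nonpos hll3 ?_ (by norm_num)
    exact Real.log_le_log (by linarith [log_three_gt_one]) (Real.log_le_log (by norm_num) h3)
  have hllx : 0 < Real.log (Real.log x) := loglog_pos h3
  have hlx0 : 0 < Real.log x₀ := by
    have h := Real.log_le_log (show (0:ℝ) < x by linarith) hx
    linarith
  unfold ellF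
  exact mul_le_mul hA hB (Real.rpow_nonneg hllx.le _) (Real.rpow_nonneg hlx0.le _)

lemma abel_bound (w : ℕ → ℝ) (hw : ∀ m, 0 ≤ w m) (L : ℝ) (hL : 0 ≤ L)
    (hW : ∀ n : ℕ, ∑ m ∈ Icc 1 n, w m ≤ L * n) (M : ℕ) (hM : 1 ≤ M) :
    ∑ m ∈ Icc 1 M, w m / m ≤ L * (1 + Real.log M) := by
  have hMR : (0:ℝ) < M := by exact_mod_cast hM
  have habel := abel_ident w M
  rw [habel]
  have h1 : (∑ m ∈ Icc 1 M, w m) / M ≤ L := by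
    rw [div_le_iff₀ hMR]
    exact hW M
  have h2 : ∑ j ∈ Ico 1 M, (∑ m ∈ Icc 1 j, w m) * (1/j - 1/(j+1))
      ≤ L * Real.log M := by
    calc ∑ j ∈ Ico 1 M, (∑ m ∈ Icc 1 j, w m) * (1/j - 1/(j+1))
        ≤ ∑ j ∈ Ico 1 M, L * (1/(j+1)) := by
          refine Finset.sum_le_sum fun j hj => ?_
          have hj1 : 1 ≤ j := (Finset.mem_Ico.1 hj).1
          have hjR : (0:ℝ) < j := by exact_mod_cast hj1
          have hfac : (0:ℝ) ≤ 1/(j:ℝ) - 1/(j+1) := by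
            rw [sub_nonneg]
            apply div_le_div_of_nonneg_left (by norm_num) hjR (by linarith)
          calc (∑ m ∈ Icc 1 j, w m) * (1/(j:ℝ) - 1/(j+1))
              ≤ (L * j) * (1/(j:ℝ) - 1/(j+1)) :=
                mul_le_mul_of_nonneg_right (hW j) hfac
            _ = L * (1/((j:ℝ)+1)) := by field_simp; ring
      _ = L * ∑ j ∈ Ico 1 M, (1:ℝ)/(j+1) := by rw [Finset.mul_sum]
      _ ≤ L * Real.log M := mul_le_mul_of_nonneg_left (harmonic_le_log M hM) hL
  linarith
lemma expArg (C' x : ℝ) :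
    -C' * Real.log x ^ ((3:ℝ)/5) * Real.log (Real.log x) ^ (-(1:ℝ)/5) = -(C' * ellF x) := by
  unfold ellF; ring

lemma moebius_Icc_div (N : ℕ) (hN : 1 ≤ N) :
    ∑ d ∈ Icc 1 N, ((μ d : ℤ) : ℝ) * ((N / d : ℕ) : ℝ) = 1 := by
  have hs := swapFull N (fun d _ => ((μ d : ℤ) : ℝ))
  have hL : ∑ n ∈ Icc 1 N, ∑ d ∈ n.divisors, ((μ d : ℤ) : ℝ) = 1 := by
    rw [Finset.sum_congr rfl (fun n _ => moebius_divisors_sum n)]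
    exact sum_ite_one N hN
  have hR : ∀ d : ℕ, ∑ _m ∈ Icc 1 (N / d), ((μ d : ℤ) : ℝ)
      = ((μ d : ℤ) : ℝ) * ((N / d : ℕ) : ℝ) := by
    intro d
    rw [Finset.sum_const, Nat.card_Icc]
    simp [nsmul_eq_mul, mul_comm]
  rw [← Finset.sum_congr rfl (fun d _ => hR d), ← hs, hL]
lemma Icc_one_eq_Ioc_zero (k : ℕ) : Icc 1 k = Ioc 0 k := by
  ext d; simp only [Finset.mem_Icc, Finset.mem_Ioc]; omega

set_option maxHeartbeats 1000000 in
theorem theorem_one_abstract (t : ℕ → ℝ) (K β A C₀ : ℝ)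
    (hK : 0 < K) (hβ0 : 0 < β) (hβ1 : β < 1) (hA : 0 < A) (hC₀ : 0 < C₀)
    (hHecke : ∀ n : ℕ, 1 ≤ n →
      t (n ^ 2) = ∑ d ∈ n.divisors, ((μ d : ℤ) : ℝ) * (t (n / d)) ^ 2)
    (hRS : ∀ y : ℝ, 1 ≤ y → |(∑ n ∈ Icc 1 ⌊y⌋₊, (t n) ^ 2) - K * y| ≤ y ^ β)
    (hPNT : ∀ x : ℝ, 3 ≤ x →
      |∑ n ∈ Icc 1 ⌊x⌋₊, ((μ n : ℤ) : ℝ)| ≤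
        A * x * Real.exp (-C₀ * (Real.log x) ^ ((3:ℝ)/5) * (Real.log (Real.log x)) ^ (-(1:ℝ)/5))) :
    ∃ B > (0:ℝ), ∃ C > (0:ℝ), ∀ x : ℝ, 3 ≤ x →
      |∑ n ∈ Icc 1 ⌊x⌋₊, t (n ^ 2)| ≤
        B * (K + 1) * x *
          Real.exp (-C * (Real.log x) ^ ((3:ℝ)/5) * (Real.log (Real.log x)) ^ (-(1:ℝ)/5)) := by
  set θ : ℝ := (1 - β)/2 with hθdef
  have hθ0 : 0 < θ := by rw [hθdef]; linarith
  have hθ1 : θ < 1 := by rw [hθdef]; linarith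
  have hθ2 : 0 < θ/2 := by positivity
  set C₁ : ℝ := C₀ * (θ/2) ^ ((3:ℝ)/5) with hC₁def
  have hC₁0 : 0 < C₁ := by rw [hC₁def]; positivity
  set C : ℝ := min θ (C₁/2) with hCdef
  have hC0 : 0 < C := lt_min hθ0 (by positivity)
  -- global bounds
  have habsmu : ∀ d : ℕ, |((μ d : ℤ) : ℝ)| ≤ 1 := by
    intro d
    have h := ArithmeticFunction.abs_moebius_le_one (n := d)
    exact_mod_cast h
  have hT_le : ∀ n : ℕ, ∑ m ∈ Icc 1 n, t m ^ 2 ≤ (K + 1) * n := by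
    intro n
    rcases Nat.eq_zero_or_pos n with rfl | hn
    · simp
    · have h1 : (1:ℝ) ≤ (n:ℝ) := by exact_mod_cast hn
      have h := hRS n h1
      rw [Nat.floor_natCast] at h
      have h2 : ((n:ℝ)) ^ β ≤ (n:ℝ) := by
        calc (n:ℝ)^β ≤ (n:ℝ)^(1:ℝ) := Real.rpow_le_rpow_of_exponent_le h1 (le_of_lt hβ1)
          _ = n := Real.rpow_one _
      have h3 := abs_le.1 h
      linarith only [h3.2, h2]
  have hT_nonneg : ∀ n : ℕ, 0 ≤ ∑ m ∈ Icc 1 n, t m ^ 2 := fun n =>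
    Finset.sum_nonneg fun m _ => sq_nonneg _
  have hMf : ∀ y : ℕ, 3 ≤ y →
      |∑ d ∈ Icc 1 y, ((μ d : ℤ) : ℝ)| ≤ A * y * Real.exp (-(C₀ * ellF y)) := by
    intro y hy
    have h3 : (3:ℝ) ≤ (y:ℝ) := by exact_mod_cast hy
    have h := hPNT y h3
    rw [Nat.floor_natCast, expArg] at h
    exact h
  -- eventual conditions
  have hEv : ∀ᶠ x : ℝ in Filter.atTop,
      (Real.exp (Real.exp 1) ≤ x ∧ 4 ≤ x ^ θ ∧ Real.log 2 ≤ (θ/2) * Real.log x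
        ∧ Real.log (Real.log x) ≤ (C₁/2) * (Real.log x) ^ ((2:ℝ)/5)
        ∧ 2 ≤ x ^ (1 - θ)) := by
    have e1 : ∀ᶠ x : ℝ in Filter.atTop, Real.exp (Real.exp 1) ≤ x :=
      Filter.eventually_ge_atTop _
    have e2 : ∀ᶠ x : ℝ in Filter.atTop, 4 ≤ x ^ θ :=
      (tendsto_rpow_atTop hθ0).eventually_ge_atTop 4
    have e3 : ∀ᶠ x : ℝ in Filter.atTop, Real.log 2 ≤ (θ/2) * Real.log x := by
      filter_upwards [Real.tendsto_log_atTop.eventually_ge_atTop ((2/θ) * Real.log 2)]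
        with x hx
      have h0 : Real.log 2 = (θ/2) * ((2/θ)*Real.log 2) := by field_simp
      rw [h0]
      exact mul_le_mul_of_nonneg_left hx (by positivity)
    have e4 : ∀ᶠ x : ℝ in Filter.atTop,
        Real.log (Real.log x) ≤ (C₁/2) * (Real.log x) ^ ((2:ℝ)/5) := by
      have hO := (isLittleO_log_rpow_atTop (show (0:ℝ) < 2/5 by norm_num)).def
        (show (0:ℝ) < C₁/2 by positivity)
      have hu : ∀ᶠ u : ℝ in Filter.atTop, Real.log u ≤ (C₁/2) * u ^ ((2:ℝ)/5) := by
        filter_upwards [hO, Filter.eventually_ge_atTop (1:ℝ)] with u h h1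
        have h2 : (0:ℝ) ≤ u ^ ((2:ℝ)/5) := Real.rpow_nonneg (by linarith) _
        calc Real.log u ≤ ‖Real.log u‖ := le_abs_self _
          _ ≤ C₁/2 * ‖u ^ ((2:ℝ)/5)‖ := h
          _ = C₁/2 * u ^ ((2:ℝ)/5) := by rw [Real.norm_eq_abs, abs_of_nonneg h2]
      exact Real.tendsto_log_atTop.eventually hu
    have e5 : ∀ᶠ x : ℝ in Filter.atTop, 2 ≤ x ^ (1 - θ) :=
      (tendsto_rpow_atTop (by linarith)).eventually_ge_atTop 2
    filter_upwards [e1, e2, e3, e4, e5] with x h1 h2 h3 h4 h5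
    exact ⟨h1, h2, h3, h4, h5⟩
  obtain ⟨x₁, hx₁⟩ := hEv.exists_forall_of_atTop
  set x₀ : ℝ := max x₁ 3 with hx₀def
  set L₀ : ℝ := Real.log x₀ ^ ((3:ℝ)/5) * Real.log (Real.log 3) ^ (-(1:ℝ)/5) with hL₀def
  set B : ℝ := max (2 + 8*A) (x₀ * Real.exp (C * L₀)) with hBdef
  have hB0 : 0 < B := lt_of_lt_of_le (by linarith) (le_max_left _ _)
  refine ⟨B, hB0, C, hC0, ?_⟩
  intro x hx3
  have hx0 : (0:ℝ) < x := by linarith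
  rw [expArg]
  -- trivial pointwise bound used in both branches
  have htn : ∀ n : ℕ, 1 ≤ n → |t (n^2)| ≤ (K+1) * n := by
    intro n hn
    rw [hHecke n hn]
    calc |∑ d ∈ n.divisors, ((μ d:ℤ):ℝ) * t (n/d) ^ 2|
        ≤ ∑ d ∈ n.divisors, |((μ d:ℤ):ℝ) * t (n/d) ^ 2| := Finset.abs_sum_le_sum_abs _ _
      _ ≤ ∑ d ∈ n.divisors, t (n/d) ^ 2 := by
          refine Finset.sum_le_sum fun d _ => ?_
          rw [abs_mul, abs_of_nonneg (sq_nonneg (t (n/d)))]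
          exact mul_le_of_le_one_left (sq_nonneg _) (habsmu d)
      _ = ∑ d ∈ n.divisors, t d ^ 2 := Nat.sum_div_divisors n (fun d => t d ^2)
      _ ≤ ∑ m ∈ Icc 1 n, t m ^ 2 := by
          refine Finset.sum_le_sum_of_subset_of_nonneg ?_ (fun m _ _ => sq_nonneg _)
          intro d hd
          rw [Finset.mem_Icc]
          exact ⟨Nat.pos_of_mem_divisors hd,
            Nat.le_of_dvd (by omega) (Nat.mem_divisors.1 hd).1⟩
      _ ≤ (K+1)*n := hT_le n
  by_cases hbig : x₁ ≤ x
  · -- LARGE x branch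
    obtain ⟨hxee, hxθ4, hlog2, hll, hx1θ⟩ := hx₁ x hbig
    have hlogx1 : 1 < Real.log x := log_gt_one hx3
    have hellx : 0 ≤ ellF x := ellF_nonneg hx3
    set N : ℕ := ⌊x⌋₊ with hNdef
    set D : ℕ := ⌊x ^ θ⌋₊ with hDdef
    have hN3 : 3 ≤ N := Nat.le_floor (by exact_mod_cast hx3)
    have hNx : (N:ℝ) ≤ x := Nat.floor_le hx0.le
    have hD3 : 3 ≤ D := Nat.le_floor (by push_cast; linarith only [hxθ4])
    have hDxθ : (D:ℝ) ≤ x ^ θ := Nat.floor_le (by positivity)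
    have hxθD : x ^ θ - 1 ≤ (D:ℝ) := by
      have h := Nat.lt_floor_add_one (x ^ θ); linarith only [h]
    have hx2θ : 2 * x ^ θ ≤ x := by
      have h : x ^ θ * 2 ≤ x ^ θ * x ^ (1-θ) :=
        mul_le_mul_of_nonneg_left hx1θ (by positivity)
      calc 2 * x ^ θ = x ^ θ * 2 := mul_comm _ _
        _ ≤ x ^ θ * x ^ (1-θ) := h
        _ = x := by rw [← Real.rpow_add hx0]; norm_num
    have hD1N : D + 1 ≤ N := by
      refine Nat.le_floor ?_
      push_cast
      linarith only [hDxθ, hxθ4, hx2θ]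
    have hDN : D ≤ N := by omega
    have hDpos : (0:ℝ) < (D:ℝ) := by
      have h3D : (3:ℝ) ≤ (D:ℝ) := by exact_mod_cast hD3
      linarith only [h3D]
    have hlogD : (θ/2) * Real.log x ≤ Real.log D := by
      have hD2 : x ^ θ / 2 ≤ (D:ℝ) := by linarith only [hxθD, hxθ4]
      have hlg : Real.log (x ^ θ / 2) ≤ Real.log D := Real.log_le_log (by positivity) hD2
      rw [Real.log_div (by positivity) (by norm_num), Real.log_rpow hx0] at hlg
      linarith only [hlg, hlog2]
    -- identity: S = K + sum of mu * E
    have hS1 : ∑ n ∈ Icc 1 N, t (n^2)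
        = ∑ d ∈ Icc 1 N, ((μ d:ℤ):ℝ) * ∑ m ∈ Icc 1 (N/d), t m ^ 2 := by
      rw [Finset.sum_congr rfl (fun n hn => hHecke n (Finset.mem_Icc.1 hn).1),
        swapFull N (fun d m => ((μ d:ℤ):ℝ) * t m ^ 2)]
      exact Finset.sum_congr rfl fun d _ => (Finset.mul_sum _ _ _).symm
    set E : ℕ → ℝ := fun d => (∑ m ∈ Icc 1 (N/d), t m ^ 2) - K * ((N/d : ℕ):ℝ) with hEdef
    have hS2 : ∑ n ∈ Icc 1 N, t (n^2) = K + ∑ d ∈ Icc 1 N, ((μ d:ℤ):ℝ) * E d := by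
      rw [hS1]
      have hexp : ∀ d ∈ Icc 1 N, ((μ d:ℤ):ℝ) * ∑ m ∈ Icc 1 (N/d), t m ^2
          = ((μ d:ℤ):ℝ) * E d + K * (((μ d:ℤ):ℝ) * ((N/d : ℕ):ℝ)) := by
        intro d _
        simp only [hEdef]
        ring
      rw [Finset.sum_congr rfl hexp, Finset.sum_add_distrib, ← Finset.mul_sum,
        moebius_Icc_div N (by omega)]
      ring
    have hE : ∀ d ∈ Icc 1 N, |E d| ≤ x ^ β := by
      intro d hd
      obtain ⟨hd1, hdN⟩ := Finset.mem_Icc.1 hd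
      have hq1 : 1 ≤ N / d := (Nat.one_le_div_iff (by omega)).2 hdN
      have hq1R : (1:ℝ) ≤ ((N/d : ℕ):ℝ) := by exact_mod_cast hq1
      have h := hRS ((N/d : ℕ):ℝ) hq1R
      rw [Nat.floor_natCast] at h
      simp only [hEdef]
      refine le_trans h ?_
      refine Real.rpow_le_rpow (Nat.cast_nonneg _) ?_ hβ0.le
      calc ((N/d:ℕ):ℝ) ≤ (N:ℝ) := by exact_mod_cast Nat.div_le_self N d
        _ ≤ x := hNx
    have hsplit : ∑ d ∈ Icc 1 N, ((μ d:ℤ):ℝ) * E d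
        = ∑ d ∈ Ioc 0 D, ((μ d:ℤ):ℝ) * E d + ∑ d ∈ Ioc D N, ((μ d:ℤ):ℝ) * E d := by
      rw [Icc_one_eq_Ioc_zero]
      exact (Finset.sum_Ioc_consecutive _ (Nat.zero_le D) hDN).symm
    -- head bound
    have hHead : |∑ d ∈ Ioc 0 D, ((μ d:ℤ):ℝ) * E d| ≤ (D:ℝ) * x ^ β := by
      calc |∑ d ∈ Ioc 0 D, ((μ d:ℤ):ℝ) * E d|
          ≤ ∑ d ∈ Ioc 0 D, |((μ d:ℤ):ℝ) * E d| := Finset.abs_sum_le_sum_abs _ _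
        _ ≤ ∑ _d ∈ Ioc 0 D, x ^ β := by
            refine Finset.sum_le_sum fun d hd => ?_
            have hd' : d ∈ Icc 1 N := by
              rw [Finset.mem_Ioc] at hd
              rw [Finset.mem_Icc]
              omega
            rw [abs_mul]
            calc |((μ d:ℤ):ℝ)| * |E d| ≤ 1 * (x ^ β) :=
                  mul_le_mul (habsmu d) (hE d hd') (abs_nonneg _) zero_le_one
              _ = x ^ β := one_mul _
        _ = (D:ℝ) * x ^ β := by
            rw [Finset.sum_const, Nat.card_Ioc]
            simp [nsmul_eq_mul]
    have hCθ : C ≤ θ := min_le_left _ _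
    have hxe1 : x ^ (θ + β) ≤ x * Real.exp (-(C * ellF x)) := by
      have hCle : C * ellF x ≤ θ * Real.log x := by
        have hle : ellF x ≤ Real.log x := ellF_le_log hxee
        exact mul_le_mul hCθ hle hellx hθ0.le
      have hxpow : x ^ (θ + β) = Real.exp ((θ+β) * Real.log x) := by
        rw [Real.rpow_def_of_pos hx0]; ring_nf
      have hxe : x * Real.exp (-(C * ellF x)) = Real.exp (Real.log x - C * ellF x) := by
        rw [Real.exp_sub, Real.exp_log hx0, Real.exp_neg]; ring
      rw [hxpow, hxe]
      refine Real.exp_le_exp.2 ?_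
      have hθβ : θ + β = 1 - θ := by rw [hθdef]; ring
      rw [hθβ]
      linarith only [hCle]
    have hone_le : (1:ℝ) ≤ x * Real.exp (-(C * ellF x)) := by
      refine le_trans ?_ hxe1
      calc (1:ℝ) = x ^ (0:ℝ) := (Real.rpow_zero x).symm
        _ ≤ x ^ (θ + β) := Real.rpow_le_rpow_of_exponent_le (by linarith only [hx3]) (by linarith only [hθ0, hβ0])
    have hHead2 : |∑ d ∈ Ioc 0 D, ((μ d:ℤ):ℝ) * E d| ≤ x * Real.exp (-(C * ellF x)) := by
      refine le_trans hHead (le_trans ?_ hxe1)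
      calc (D:ℝ) * x ^ β ≤ x ^ θ * x ^ β :=
            mul_le_mul_of_nonneg_right hDxθ (by positivity)
        _ = x ^ (θ + β) := (Real.rpow_add hx0 θ β).symm
    -- tail
    set M₀ : ℕ := N / (D + 1) with hM₀def
    set Gf : ℕ → ℝ := fun m => ∑ d ∈ Ioc D (N / m), ((μ d:ℤ):ℝ) with hGdef
    have hTid : ∑ d ∈ Ioc D N, ((μ d:ℤ):ℝ) * E d
        = ∑ m ∈ Icc 1 M₀, Gf m * (t m ^ 2 - K) := by
      have ht1 := swapTail D N (fun d => ((μ d:ℤ):ℝ)) (fun m => t m ^ 2)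
      have ht2 := swapTail D N (fun d => ((μ d:ℤ):ℝ)) (fun _ => (1:ℝ))
      have hexp : ∀ d ∈ Ioc D N, ((μ d:ℤ):ℝ) * E d
          = ((μ d:ℤ):ℝ) * (∑ m ∈ Icc 1 (N/d), t m ^2)
            - K * (((μ d:ℤ):ℝ) * ∑ _m ∈ Icc 1 (N/d), (1:ℝ)) := by
        intro d _
        simp only [hEdef, Finset.sum_const, Nat.card_Icc, nsmul_eq_mul]
        push_cast
        ring
      rw [Finset.sum_congr rfl hexp, Finset.sum_sub_distrib, ht1, ← Finset.mul_sum, ht2,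
        Finset.mul_sum, ← Finset.sum_sub_distrib]
      exact Finset.sum_congr rfl fun m _ => by ring
    have hGf : ∀ m ∈ Icc 1 M₀, |Gf m| ≤ 2 * A * ((N/m : ℕ):ℝ) * Real.exp (-(C₁ * ellF x)) := by
      intro m hm
      obtain ⟨hm1, hmM₀⟩ := Finset.mem_Icc.1 hm
      have hmul : m * (D+1) ≤ N := (Nat.le_div_iff_mul_le (by omega)).1 hmM₀
      have hDm : D + 1 ≤ N / m := (Nat.le_div_iff_mul_le hm1).2 (by rw [mul_comm]; exact hmul)
      have hy3 : 3 ≤ N / m := by omega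
      have hy3R : (3:ℝ) ≤ ((N/m : ℕ):ℝ) := by exact_mod_cast hy3
      have hyN : N / m ≤ N := Nat.div_le_self _ _
      have hyx : ((N/m : ℕ):ℝ) ≤ x := le_trans (by exact_mod_cast hyN) hNx
      have hDyR : (D:ℝ) ≤ ((N/m : ℕ):ℝ) := by exact_mod_cast (by omega : D ≤ N / m)
      have hDx : (D:ℝ) ≤ x := le_trans hDyR hyx
      have hD3R : (3:ℝ) ≤ (D:ℝ) := by exact_mod_cast hD3
      have hlogy : (θ/2) * Real.log x ≤ Real.log ((N/m : ℕ):ℝ) :=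
        le_trans hlogD (Real.log_le_log hDpos hDyR)
      have hcompy : C₁ * ellF x ≤ C₀ * ellF ((N/m : ℕ):ℝ) := by
        have hcmp := ellF_compare hθ2 hy3R hyx hlogy
        calc C₁ * ellF x = C₀ * ((θ/2) ^ ((3:ℝ)/5) * ellF x) := by rw [hC₁def]; ring
          _ ≤ C₀ * ellF ((N/m : ℕ):ℝ) := mul_le_mul_of_nonneg_left hcmp hC₀.le
      have hcompD : C₁ * ellF x ≤ C₀ * ellF (D:ℝ) := by
        have hcmp := ellF_compare hθ2 hD3R hDx hlogD
        calc C₁ * ellF x = C₀ * ((θ/2) ^ ((3:ℝ)/5) * ellF x) := by rw [hC₁def]; ring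
          _ ≤ C₀ * ellF (D:ℝ) := mul_le_mul_of_nonneg_left hcmp hC₀.le
      have hsplitG : Gf m = (∑ d ∈ Icc 1 (N/m), ((μ d:ℤ):ℝ))
          - (∑ d ∈ Icc 1 D, ((μ d:ℤ):ℝ)) := by
        have hc := Finset.sum_Ioc_consecutive (fun d => ((μ d:ℤ):ℝ))
          (Nat.zero_le D) (by omega : D ≤ N / m)
        simp only [hGdef]
        rw [Icc_one_eq_Ioc_zero, Icc_one_eq_Ioc_zero]
        linarith only [hc]
      have hMy := hMf (N/m) hy3
      have hMD := hMf D hD3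
      have hey : Real.exp (-(C₀ * ellF ((N/m : ℕ):ℝ))) ≤ Real.exp (-(C₁ * ellF x)) :=
        Real.exp_le_exp.2 (by linarith only [hcompy])
      have heD : Real.exp (-(C₀ * ellF (D:ℝ))) ≤ Real.exp (-(C₁ * ellF x)) :=
        Real.exp_le_exp.2 (by linarith only [hcompD])
      rw [hsplitG]
      calc |(∑ d ∈ Icc 1 (N/m), ((μ d:ℤ):ℝ)) - (∑ d ∈ Icc 1 D, ((μ d:ℤ):ℝ))|
          ≤ |∑ d ∈ Icc 1 (N/m), ((μ d:ℤ):ℝ)| + |∑ d ∈ Icc 1 D, ((μ d:ℤ):ℝ)| :=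
            abs_sub _ _
        _ ≤ A * ((N/m : ℕ):ℝ) * Real.exp (-(C₀ * ellF ((N/m : ℕ):ℝ)))
            + A * (D:ℝ) * Real.exp (-(C₀ * ellF (D:ℝ))) := add_le_add hMy hMD
        _ ≤ A * ((N/m : ℕ):ℝ) * Real.exp (-(C₁ * ellF x))
            + A * ((N/m : ℕ):ℝ) * Real.exp (-(C₁ * ellF x)) := by
            have e1 : A * ((N/m : ℕ):ℝ) * Real.exp (-(C₀ * ellF ((N/m : ℕ):ℝ)))
                ≤ A * ((N/m : ℕ):ℝ) * Real.exp (-(C₁ * ellF x)) := by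
              exact mul_le_mul_of_nonneg_left hey (mul_nonneg hA.le (Nat.cast_nonneg _))
            have e2 : A * (D:ℝ) * Real.exp (-(C₀ * ellF (D:ℝ)))
                ≤ A * ((N/m : ℕ):ℝ) * Real.exp (-(C₁ * ellF x)) := by
              calc A * (D:ℝ) * Real.exp (-(C₀ * ellF (D:ℝ)))
                  ≤ A * ((N/m : ℕ):ℝ) * Real.exp (-(C₀ * ellF (D:ℝ))) := by
                    refine mul_le_mul_of_nonneg_right
                      (mul_le_mul_of_nonneg_left hDyR hA.le) (Real.exp_pos _).le
                _ ≤ A * ((N/m : ℕ):ℝ) * Real.exp (-(C₁ * ellF x)) := by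
                    exact mul_le_mul_of_nonneg_left heD (mul_nonneg hA.le (Nat.cast_nonneg _))
            exact add_le_add e1 e2
        _ = 2 * A * ((N/m : ℕ):ℝ) * Real.exp (-(C₁ * ellF x)) := by ring
    -- Abel bound for the weight
    have hM₀1 : 1 ≤ M₀ := (Nat.one_le_div_iff (by omega)).2 hD1N
    have hM₀x : ((M₀:ℕ):ℝ) ≤ x := by
      have : M₀ ≤ N := Nat.div_le_self _ _
      calc ((M₀:ℕ):ℝ) ≤ (N:ℝ) := by exact_mod_cast this
        _ ≤ x := hNx
    have hlogM₀ : Real.log M₀ ≤ Real.log x := by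
      rcases eq_or_lt_of_le hM₀x with h | h
      · rw [h]
      · exact (Real.log_le_log (by exact_mod_cast hM₀1) hM₀x)
    have hW : ∀ n : ℕ, ∑ m ∈ Icc 1 n, (t m ^ 2 + K) ≤ (2*(K+1)) * n := by
      intro n
      rw [Finset.sum_add_distrib, Finset.sum_const, Nat.card_Icc]
      have h1 := hT_le n
      have h2 : ((n + 1 - 1 : ℕ) : ℝ) = (n:ℝ) := by simp
      rw [nsmul_eq_mul, h2]
      have h3 : (0:ℝ) ≤ (n:ℝ) := Nat.cast_nonneg n
      linarith only [h1, h3]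
    have habel := abel_bound (fun m => t m ^ 2 + K) (fun m => add_nonneg (sq_nonneg _) hK.le)
      (2*(K+1)) (by linarith only [hK]) hW M₀ hM₀1
    obtain ⟨ex, hexdef⟩ : ∃ e : ℝ, e = Real.exp (-(C₁ * ellF x)) := ⟨_, rfl⟩
    have hex0 : 0 < ex := by rw [hexdef]; exact Real.exp_pos _
    have hTail : |∑ d ∈ Ioc D N, ((μ d:ℤ):ℝ) * E d|
        ≤ 8 * A * (K+1) * x * Real.log x * ex := by
      rw [hTid]
      calc |∑ m ∈ Icc 1 M₀, Gf m * (t m ^ 2 - K)|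
          ≤ ∑ m ∈ Icc 1 M₀, |Gf m * (t m ^ 2 - K)| := Finset.abs_sum_le_sum_abs _ _
        _ ≤ ∑ m ∈ Icc 1 M₀, (2*A*ex*x) * ((t m ^ 2 + K)/m) := by
            refine Finset.sum_le_sum fun m hm => ?_
            obtain ⟨hm1, _⟩ := Finset.mem_Icc.1 hm
            have hmR : (0:ℝ) < (m:ℝ) := by exact_mod_cast hm1
            have hy_le : ((N/m : ℕ):ℝ) ≤ x / m := by
              calc ((N/m : ℕ):ℝ) ≤ (N:ℝ)/(m:ℝ) := Nat.cast_div_le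
                _ ≤ x / m := by gcongr
            have habs2 : |t m ^ 2 - K| ≤ t m ^ 2 + K := by
              rw [abs_le]
              constructor <;> [linarith only [sq_nonneg (t m)]; linarith only [hK]]
            have hGf' : |Gf m| ≤ 2 * A * ((N/m : ℕ):ℝ) * ex := by
              rw [hexdef]; exact hGf m hm
            calc |Gf m * (t m ^ 2 - K)| = |Gf m| * |t m ^ 2 - K| := abs_mul _ _
              _ ≤ (2 * A * ((N/m : ℕ):ℝ) * ex) * (t m ^ 2 + K) := by
                  refine mul_le_mul hGf' habs2 (abs_nonneg _) ?_
                  exact mul_nonneg (mul_nonneg (mul_nonneg (by norm_num) hA.le)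
                    (Nat.cast_nonneg _)) hex0.le
              _ ≤ (2 * A * (x/m) * ex) * (t m ^ 2 + K) := by
                  refine mul_le_mul_of_nonneg_right ?_ (add_nonneg (sq_nonneg _) hK.le)
                  refine mul_le_mul_of_nonneg_right
                    (mul_le_mul_of_nonneg_left hy_le (by linarith only [hA])) hex0.le
              _ = (2*A*ex*x) * ((t m ^ 2 + K)/m) := by ring
        _ = (2*A*ex*x) * ∑ m ∈ Icc 1 M₀, ((t m ^ 2 + K)/m) := by rw [Finset.mul_sum]
        _ ≤ (2*A*ex*x) * ((2*(K+1)) * (1 + Real.log M₀)) := by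
            exact mul_le_mul_of_nonneg_left habel (mul_nonneg (mul_nonneg
              (mul_nonneg (by norm_num) hA.le) hex0.le) hx0.le)
        _ ≤ 8 * A * (K+1) * x * Real.log x * ex := by
            have h1 : 1 + Real.log M₀ ≤ 2 * Real.log x := by linarith only [hlogM₀, hlogx1]
            calc (2*A*ex*x) * ((2*(K+1)) * (1 + Real.log M₀))
                = (4*A*(K+1)*x*ex) * (1 + Real.log M₀) := by ring
              _ ≤ (4*A*(K+1)*x*ex) * (2*Real.log x) := by
                  exact mul_le_mul_of_nonneg_left h1 (mul_nonneg (mul_nonneg (mul_nonneg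
                    (mul_nonneg (by norm_num) hA.le) (by linarith only [hK])) hx0.le) hex0.le)
              _ = 8 * A * (K+1) * x * Real.log x * ex := by ring
    have hlogexp : Real.log x * ex ≤ Real.exp (-(C * ellF x)) := by
      have h1 : Real.log x = Real.exp (Real.log (Real.log x)) :=
        (Real.exp_log (by linarith only [hlogx1])).symm
      rw [hexdef, h1, ← Real.exp_add]
      refine Real.exp_le_exp.2 ?_
      have h2 : Real.log (Real.log x) ≤ (C₁/2) * ellF x :=
        le_trans hll (mul_le_mul_of_nonneg_left (rpow_le_ellF hx3) (by linarith only [hC₁0]))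
      have h3 : C ≤ C₁/2 := min_le_right _ _
      have h4 : C * ellF x ≤ (C₁/2) * ellF x := mul_le_mul_of_nonneg_right h3 hellx
      linarith only [h2, h4]
    -- assemble
    obtain ⟨q, hqdef⟩ : ∃ q : ℝ, q = x * Real.exp (-(C * ellF x)) := ⟨_, rfl⟩
    have hq0 : 0 ≤ q := by rw [hqdef]; exact mul_nonneg hx0.le (Real.exp_pos _).le
    have hq1 : 1 ≤ q := by rw [hqdef]; exact hone_le
    have hHead2q : |∑ d ∈ Ioc 0 D, ((μ d:ℤ):ℝ) * E d| ≤ q := by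
      rw [hqdef]; exact hHead2
    have hKb : K ≤ (K+1) * q := by
      have h5 : K * 1 ≤ K * q := mul_le_mul_of_nonneg_left hq1 hK.le
      linarith only [h5, hq0]
    have hT2 : |∑ d ∈ Ioc D N, ((μ d:ℤ):ℝ) * E d| ≤ 8 * A * ((K+1) * q) := by
      refine le_trans hTail ?_
      calc 8 * A * (K+1) * x * Real.log x * ex
          = (8*A*(K+1)*x) * (Real.log x * ex) := by ring
        _ ≤ (8*A*(K+1)*x) * Real.exp (-(C * ellF x)) := by
            exact mul_le_mul_of_nonneg_left hlogexp (mul_nonneg (mul_nonneg (mul_nonneg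
              (by norm_num) hA.le) (by linarith only [hK])) hx0.le)
        _ = 8 * A * ((K+1) * q) := by rw [hqdef]; ring
    have hfinal : |∑ n ∈ Icc 1 N, t (n^2)|
        ≤ (2 + 8*A) * (K+1) * x * Real.exp (-(C * ellF x)) := by
      rw [hS2, hsplit]
      calc |K + (∑ d ∈ Ioc 0 D, ((μ d:ℤ):ℝ) * E d + ∑ d ∈ Ioc D N, ((μ d:ℤ):ℝ) * E d)|
          ≤ K + (|∑ d ∈ Ioc 0 D, ((μ d:ℤ):ℝ) * E d| + |∑ d ∈ Ioc D N, ((μ d:ℤ):ℝ) * E d|) := by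
            calc |K + (∑ d ∈ Ioc 0 D, ((μ d:ℤ):ℝ) * E d + ∑ d ∈ Ioc D N, ((μ d:ℤ):ℝ) * E d)|
                ≤ |K| + |∑ d ∈ Ioc 0 D, ((μ d:ℤ):ℝ) * E d + ∑ d ∈ Ioc D N, ((μ d:ℤ):ℝ) * E d| :=
                  abs_add_le _ _
              _ ≤ K + (|∑ d ∈ Ioc 0 D, ((μ d:ℤ):ℝ) * E d| + |∑ d ∈ Ioc D N, ((μ d:ℤ):ℝ) * E d|) := by
                  rw [abs_of_pos hK]
                  exact add_le_add le_rfl (abs_add_le _ _)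
        _ ≤ (K+1) * q + (q + 8 * A * ((K+1) * q)) :=
            add_le_add hKb (add_le_add hHead2q hT2)
        _ ≤ (2 + 8*A) * (K+1) * x * Real.exp (-(C * ellF x)) := by
            have h0 : (2 + 8*A) * (K+1) * x * Real.exp (-(C * ellF x))
                = (2+8*A) * ((K+1)*q) := by rw [hqdef]; ring
            rw [h0]
            have h7 : 0 ≤ K * q := mul_nonneg hK.le hq0
            linarith only [h7]
    refine le_trans hfinal ?_
    have hBge : 2 + 8*A ≤ B := le_max_left _ _
    refine mul_le_mul_of_nonneg_right ?_ (Real.exp_pos _).le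
    refine mul_le_mul_of_nonneg_right ?_ hx0.le
    refine mul_le_mul_of_nonneg_right hBge (by linarith only [hK])
  · -- SMALL x branch: x < x₁ ≤ x₀
    push_neg at hbig
    have hxle : x ≤ x₀ := le_trans hbig.le (le_max_left _ _)
    have hNx : ((⌊x⌋₊:ℕ):ℝ) ≤ x := Nat.floor_le hx0.le
    have htriv : |∑ n ∈ Icc 1 ⌊x⌋₊, t (n^2)| ≤ (K+1) * (x * x) := by
      calc |∑ n ∈ Icc 1 ⌊x⌋₊, t (n^2)| ≤ ∑ n ∈ Icc 1 ⌊x⌋₊, |t (n^2)| :=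
            Finset.abs_sum_le_sum_abs _ _
        _ ≤ ∑ n ∈ Icc 1 ⌊x⌋₊, (K+1) * (n:ℝ) :=
            Finset.sum_le_sum fun n hn => htn n (Finset.mem_Icc.1 hn).1
        _ ≤ ∑ _n ∈ Icc 1 ⌊x⌋₊, (K+1) * ((⌊x⌋₊:ℕ):ℝ) := by
            refine Finset.sum_le_sum fun n hn => ?_
            have hn2 : (n:ℝ) ≤ ((⌊x⌋₊:ℕ):ℝ) := by exact_mod_cast (Finset.mem_Icc.1 hn).2
            exact mul_le_mul_of_nonneg_left hn2 (by linarith only [hK])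
        _ = ((⌊x⌋₊:ℕ):ℝ) * ((K+1) * ((⌊x⌋₊:ℕ):ℝ)) := by
            rw [Finset.sum_const, Nat.card_Icc, nsmul_eq_mul]
            simp
        _ = (K+1) * (((⌊x⌋₊:ℕ):ℝ) * ((⌊x⌋₊:ℕ):ℝ)) := by ring
        _ ≤ (K+1) * (x * x) := by
            refine mul_le_mul_of_nonneg_left
              (mul_le_mul hNx hNx (Nat.cast_nonneg _) hx0.le) (by linarith only [hK])
    have hellub : ellF x ≤ L₀ := ellF_upper_small hx3 hxle
    have hexpLB : Real.exp (-(C * L₀)) ≤ Real.exp (-(C * ellF x)) := by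
      refine Real.exp_le_exp.2 (neg_le_neg ?_)
      exact mul_le_mul_of_nonneg_left hellub hC0.le
    have hBge : x₀ * Real.exp (C * L₀) ≤ B := le_max_right _ _
    calc |∑ n ∈ Icc 1 ⌊x⌋₊, t (n^2)| ≤ (K+1) * (x * x) := htriv
      _ ≤ (K+1) * (x * x₀) := by
          refine mul_le_mul_of_nonneg_left
            (mul_le_mul_of_nonneg_left hxle hx0.le) (by linarith only [hK])
      _ = (x₀ * Real.exp (C * L₀)) * (K+1) * x * Real.exp (-(C * L₀)) := by
          have he : Real.exp (C * L₀) * Real.exp (-(C * L₀)) = 1 := by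
            rw [← Real.exp_add, add_neg_cancel, Real.exp_zero]
          calc (K+1) * (x * x₀) = (x₀ * (K+1) * x) * 1 := by ring
            _ = (x₀ * (K+1) * x) * (Real.exp (C * L₀) * Real.exp (-(C * L₀))) := by rw [he]
            _ = (x₀ * Real.exp (C * L₀)) * (K+1) * x * Real.exp (-(C * L₀)) := by ring
      _ ≤ B * (K+1) * x * Real.exp (-(C * ellF x)) := by
          have h1 : 0 < Real.exp (-(C * L₀)) := Real.exp_pos _
          have h2 : 0 ≤ (x₀ * Real.exp (C * L₀)) := by
            have : (3:ℝ) ≤ x₀ := le_max_right _ _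
            positivity
          refine mul_le_mul ?_ hexpLB h1.le ?_
          · refine mul_le_mul_of_nonneg_right
              (mul_le_mul_of_nonneg_right hBge (by linarith only [hK])) hx0.le
          · exact le_of_lt (mul_pos (mul_pos hB0 (by linarith only [hK])) hx0)
end

section
/- Let ã : ℕ → ℝ satisfy ã(m)*ã(n) = ∑_{d | gcd(m,n)} ã(m*n/d^2) for all m, n ≥ 1, and suppose the Rankin–Selberg bound |∑_{n ≤ y} ã(n)^2 - C*y| ≤ D*y^{3/5} holds for all y ≥ 1 with constants C, D > 0. Assume |∑_{n ≤ x} μ(n)| ≤ A*x*exp(-C₀*(log x)^{3/5}*(log log x)^{-1/5}) for x ≥ 3 with constants A, C₀ > 0. Then there exist constants B, C₁ > 0 such that |∑_{n ≤ x} ã(n^2)| ≤ B*x*exp(-C₁*(log x)^{3/5}*(log log x)^{-1/5}) for all x ≥ 3. -/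
open Finset ArithmeticFunction
open scoped ArithmeticFunction.Moebius
open scoped ArithmeticFunction.zeta

lemma swap1 (H : ℕ → ℕ → ℝ) (N : ℕ) :
    ∑ n ∈ Icc 1 N, ∑ d ∈ n.divisors, H d (n / d)
      = ∑ d ∈ Icc 1 N, ∑ m ∈ Icc 1 (N / d), H d m := by
  have h1 : ∀ n ∈ Icc 1 N, ∑ d ∈ n.divisors, H d (n / d)
      = ∑ d ∈ Icc 1 N, if d ∣ n then H d (n / d) else 0 := by
    intro n hn
    rw [mem_Icc] at hn
    rw [← Finset.sum_filter]
    congr 1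
    ext d
    simp only [Nat.mem_divisors, Finset.mem_filter, mem_Icc]
    constructor
    · rintro ⟨hd, hn0⟩
      exact ⟨⟨Nat.one_le_iff_ne_zero.2 (by rintro rfl; simp [Nat.zero_dvd.1 hd] at hn0),
        le_trans (Nat.le_of_dvd (Nat.pos_of_ne_zero hn0) hd) hn.2⟩, hd⟩
    · rintro ⟨_, hd⟩
      exact ⟨hd, by omega⟩
  rw [Finset.sum_congr rfl h1, Finset.sum_comm]
  refine Finset.sum_congr rfl (fun d hd => ?_)
  rw [mem_Icc] at hd
  rw [← Finset.sum_filter]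
  refine Finset.sum_nbij' (fun n => n / d) (fun m => d * m) ?_ ?_ ?_ ?_ ?_
  · intro n hn
    simp only [Finset.mem_filter, mem_Icc] at hn ⊢
    obtain ⟨⟨h1n, h2n⟩, hdvd⟩ := hn
    constructor
    · exact Nat.one_le_div_iff (by omega) |>.2 (Nat.le_of_dvd (by omega) hdvd)
    · exact Nat.div_le_div_right h2n
  · intro m hm
    simp only [Finset.mem_filter, mem_Icc] at hm ⊢
    obtain ⟨h1m, h2m⟩ := hm
    have hmd : m * d ≤ N := (Nat.le_div_iff_mul_le (by omega)).1 h2m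
    refine ⟨⟨Nat.mul_pos (by omega) (by omega), by rw [Nat.mul_comm]; exact hmd⟩, Dvd.intro m rfl⟩
  · intro n hn
    simp only [Finset.mem_filter, mem_Icc] at hn
    exact Nat.mul_div_cancel' hn.2
  · intro m hm
    exact Nat.mul_div_cancel_left m (by omega)
  · intro n hn
    rfl

lemma swap2 (H : ℕ → ℕ → ℝ) (N z : ℕ) :
    ∑ d ∈ Ioc z N, ∑ m ∈ Icc 1 (N / d), H d m
      = ∑ m ∈ Icc 1 (N / (z + 1)), ∑ d ∈ Ioc z (N / m), H d m := by
  have h1 : ∀ d ∈ Ioc z N, ∑ m ∈ Icc 1 (N / d), H d m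
      = ∑ m ∈ Icc 1 N, if d * m ≤ N then H d m else 0 := by
    intro d hd
    rw [mem_Ioc] at hd
    rw [← Finset.sum_filter]
    congr 1
    ext m
    simp only [Finset.mem_filter, mem_Icc]
    constructor
    · rintro ⟨h1m, h2m⟩
      have hdm : m * d ≤ N := (Nat.le_div_iff_mul_le (by omega)).1 h2m
      have hdm' : d * m ≤ N := by rw [Nat.mul_comm]; exact hdm
      exact ⟨⟨h1m, le_trans (Nat.le_mul_of_pos_left m (by omega : 0 < d)) hdm'⟩, hdm'⟩
    · rintro ⟨⟨h1m, _⟩, h3⟩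
      exact ⟨h1m, (Nat.le_div_iff_mul_le (by omega)).2 (by rw [Nat.mul_comm]; exact h3)⟩
  rw [Finset.sum_congr rfl h1, Finset.sum_comm]
  have h2 : ∀ m ∈ Icc 1 N, ∑ d ∈ Ioc z N, (if d * m ≤ N then H d m else 0)
      = ∑ d ∈ Ioc z (N / m), H d m := by
    intro m hm
    rw [mem_Icc] at hm
    rw [← Finset.sum_filter]
    congr 1
    ext d
    simp only [Finset.mem_filter, mem_Ioc]
    constructor
    · rintro ⟨⟨h1d, _⟩, h3⟩
      exact ⟨h1d, (Nat.le_div_iff_mul_le (by omega)).2 h3⟩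
    · rintro ⟨h1d, h2d⟩
      have hdm : d * m ≤ N := by
        exact (Nat.le_div_iff_mul_le (by omega : 0 < m)).1 h2d
      exact ⟨⟨h1d, le_trans (Nat.le_mul_of_pos_right d (by omega)) hdm⟩, hdm⟩
  rw [Finset.sum_congr rfl h2]
  symm
  apply Finset.sum_subset
  · exact Finset.Icc_subset_Icc_right (Nat.div_le_self _ _)
  · intro m hm hm'
    rw [mem_Icc] at hm hm'
    have hmz : N / m ≤ z := by
      have h4 : ¬ m * (z + 1) ≤ N := fun h => hm' ⟨hm.1, (Nat.le_div_iff_mul_le (by omega)).2 h⟩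
      have hcomm : (z + 1) * m = m * (z + 1) := Nat.mul_comm _ _
      have : N / m < z + 1 := (Nat.div_lt_iff_lt_mul (by omega : 0 < m)).2 (by omega)
      omega
    rw [Finset.Ioc_eq_empty (by omega), Finset.sum_empty]

lemma hyperbola (b : ℕ → ℝ) (N z : ℕ) (h1z : 1 ≤ z) (hzN : z ≤ N) :
    ∑ n ∈ Icc 1 N, ∑ d ∈ n.divisors, ((μ d : ℤ) : ℝ) * b (n / d)
      = (∑ d ∈ Icc 1 z, ((μ d : ℤ) : ℝ) * ∑ m ∈ Icc 1 (N / d), b m)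
        + ∑ m ∈ Icc 1 (N / (z + 1)), b m *
            ((∑ d ∈ Icc 1 (N / m), ((μ d : ℤ) : ℝ)) - ∑ d ∈ Icc 1 z, ((μ d : ℤ) : ℝ)) := by
  have key := swap1 (fun d m => ((μ d : ℤ) : ℝ) * b m) N
  rw [key]
  have hsplit : ∀ t : ℕ, Icc 1 t = Ioc 0 t := fun t => by rw [← Finset.Icc_add_one_left_eq_Ioc, zero_add]
  have hsum : ∑ d ∈ Icc 1 N, ∑ m ∈ Icc 1 (N / d), ((μ d : ℤ) : ℝ) * b m
      = (∑ d ∈ Icc 1 z, ∑ m ∈ Icc 1 (N / d), ((μ d : ℤ) : ℝ) * b m)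
        + ∑ d ∈ Ioc z N, ∑ m ∈ Icc 1 (N / d), ((μ d : ℤ) : ℝ) * b m := by
    rw [hsplit N, hsplit z, ← Finset.sum_Ioc_consecutive _ (Nat.zero_le z) hzN]
  rw [hsum, swap2]
  congr 1
  · exact Finset.sum_congr rfl (fun d _ => by rw [Finset.mul_sum])
  · refine Finset.sum_congr rfl (fun m hm => ?_)
    rw [mem_Icc] at hm
    have hzm : z ≤ N / m := by
      have h1 : (z + 1) * m ≤ N := by
        rw [Nat.mul_comm]
        exact (Nat.le_div_iff_mul_le (by omega)).1 hm.2
      have h2 : z + 1 ≤ N / m := (Nat.le_div_iff_mul_le (by omega)).2 h1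
      omega
    have hIoc : ∑ d ∈ Ioc z (N / m), ((μ d : ℤ) : ℝ)
        = (∑ d ∈ Icc 1 (N / m), ((μ d : ℤ) : ℝ)) - ∑ d ∈ Icc 1 z, ((μ d : ℤ) : ℝ) := by
      rw [hsplit (N / m), hsplit z, ← Finset.sum_Ioc_consecutive _ (Nat.zero_le z) hzm]
      ring
    rw [← hIoc, ← Finset.sum_mul, mul_comm]

lemma moebius_abs (d : ℕ) : |((μ d : ℤ) : ℝ)| ≤ 1 := by
  by_cases h : Squarefree d
  · rw [moebius_apply_of_squarefree h]
    simp [abs_pow]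
  · rw [moebius_eq_zero_of_not_squarefree h]
    simp

lemma moebius_divisor_sum (n : ℕ) (hn : 1 ≤ n) :
    ∑ d ∈ n.divisors, ((μ d : ℤ) : ℝ) = if n = 1 then 1 else 0 := by
  have h1 : ∑ d ∈ n.divisors, μ d = (μ * (ζ : ArithmeticFunction ℤ)) n := by
    rw [ArithmeticFunction.coe_mul_zeta_apply]
  rw [ArithmeticFunction.moebius_mul_coe_zeta] at h1
  have h2 : (1 : ArithmeticFunction ℤ) n = if n = 1 then 1 else 0 :=
    ArithmeticFunction.one_apply
  rw [h2] at h1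
  have : ((∑ d ∈ n.divisors, μ d : ℤ) : ℝ) = ∑ d ∈ n.divisors, ((μ d : ℤ) : ℝ) := by
    push_cast; ring
  rw [← this, h1]
  split_ifs <;> norm_num

lemma moebius_inv_sq (a : ℕ → ℝ)
    (hHecke : ∀ m n : ℕ, 1 ≤ m → 1 ≤ n →
      a m * a n = ∑ d ∈ (Nat.gcd m n).divisors, a (m * n / d ^ 2)) :
    ∀ n : ℕ, 1 ≤ n → a (n ^ 2) = ∑ d ∈ n.divisors, ((μ d : ℤ) : ℝ) * (a (n / d)) ^ 2 := by
  have hdir : ∀ n : ℕ, 0 < n → ∑ i ∈ n.divisors, a (i ^ 2) = a n ^ 2 := by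
    intro n hn
    have h1 := hHecke n n (by omega) (by omega)
    rw [Nat.gcd_self] at h1
    have h2 : ∀ d ∈ n.divisors, a (n * n / d ^ 2) = a ((n / d) ^ 2) := by
      intro d hd
      rw [Nat.mem_divisors] at hd
      obtain ⟨⟨k, rfl⟩, hn0⟩ := hd
      have hd0 : 0 < d := Nat.pos_of_ne_zero fun h => hn0 (by simp [h])
      congr 1
      rw [Nat.mul_div_cancel_left k hd0]
      have : d * k * (d * k) = d ^ 2 * k ^ 2 := by ring
      rw [this, Nat.mul_div_cancel_left _ (by positivity)]
    rw [Finset.sum_congr rfl h2] at h1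
    rw [Nat.sum_div_divisors n (fun i => a (i ^ 2))] at h1
    rw [← sq] at h1
    exact h1.symm
  have hinv := (ArithmeticFunction.sum_eq_iff_sum_smul_moebius_eq
    (f := fun k => a (k ^ 2)) (g := fun n => a n ^ 2)).1 hdir
  intro n hn
  have h3 := hinv n (by omega)
  rw [← h3]
  rw [← Nat.sum_divisorsAntidiagonal (fun d e => ((μ d : ℤ) : ℝ) * (a e) ^ 2)]
  refine Finset.sum_congr rfl (fun p hp => ?_)
  rw [zsmul_eq_mul]

lemma sum_div_le (b : ℕ → ℝ) (hb : ∀ m, 0 ≤ b m) (c : ℝ)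
    (hS : ∀ j : ℕ, 1 ≤ j → ∑ m ∈ Icc 1 j, b m ≤ c * j) :
    ∀ K : ℕ, 1 ≤ K → ∑ m ∈ Icc 1 K, b m / m ≤ c * (1 + Real.log K) := by
  have hc : 0 ≤ c := by
    have h1 := hS 1 le_rfl
    simp at h1
    have := hb 1
    linarith
  have main : ∀ K : ℕ, 1 ≤ K →
      ∑ m ∈ Icc 1 K, b m / m ≤ (∑ m ∈ Icc 1 K, b m) / K + c * Real.log K := by
    intro K hK1
    induction K, hK1 using Nat.le_induction with
    | base => simp
    | succ K hK ih =>
      rw [sum_Icc_succ_top (by omega), sum_Icc_succ_top (by omega)]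
      have hK0 : (0:ℝ) < K := by exact_mod_cast hK
      have hK10 : (0:ℝ) < K + 1 := by linarith
      have hSK := hS K hK
      have hSnn : 0 ≤ ∑ m ∈ Icc 1 K, b m := Finset.sum_nonneg (fun m _ => hb m)
      have hlog : 1 / ((K:ℝ) + 1) ≤ Real.log (K + 1) - Real.log K := by
        have h1 : Real.log ((K:ℝ) / (K + 1)) ≤ (K:ℝ) / (K + 1) - 1 :=
          Real.log_le_sub_one_of_pos (by positivity)
        rw [Real.log_div (by positivity) (by positivity)] at h1
        have h2 : (K:ℝ) / (K + 1) - 1 = -(1 / ((K:ℝ) + 1)) := by rw [div_sub_one (by positivity)]; ring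
        rw [h2] at h1
        linarith
      have hstep : (∑ m ∈ Icc 1 K, b m) / K ≤ (∑ m ∈ Icc 1 K, b m) / (K + 1)
          + c * (Real.log (K + 1) - Real.log K) := by
        have hdiff : (∑ m ∈ Icc 1 K, b m) / K - (∑ m ∈ Icc 1 K, b m) / (K + 1)
            = (∑ m ∈ Icc 1 K, b m) / (K * (K + 1)) := by
          field_simp
          ring
        have hb1 : (∑ m ∈ Icc 1 K, b m) / (K * (K + 1)) ≤ c / (K + 1) := by
          rw [div_le_div_iff₀ (by positivity) (by positivity)]
          calc (∑ m ∈ Icc 1 K, b m) * (K + 1) ≤ (c * K) * (K + 1) := by nlinarith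
            _ = c / 1 * ((K:ℝ) * (K + 1)) := by ring
            _ = c * ((K:ℝ) * (K + 1)) := by ring
        have hb2 : c / ((K:ℝ) + 1) ≤ c * (Real.log (K + 1) - Real.log K) := by
          rw [div_eq_mul_one_div]
          exact mul_le_mul_of_nonneg_left hlog hc
        linarith
      have hcast : ((K:ℝ) + 1) = ((K + 1 : ℕ) : ℝ) := by push_cast; ring
      calc ∑ m ∈ Icc 1 K, b m / m + b (K + 1) / (K + 1 : ℕ)
          ≤ (∑ m ∈ Icc 1 K, b m) / K + c * Real.log K + b (K + 1) / ((K:ℝ) + 1) := by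
            push_cast; linarith
        _ ≤ (∑ m ∈ Icc 1 K, b m) / (K + 1) + c * (Real.log (K + 1) - Real.log K)
              + c * Real.log K + b (K + 1) / ((K:ℝ) + 1) := by linarith
        _ = ((∑ m ∈ Icc 1 K, b m) + b (K + 1)) / ((K:ℝ) + 1) + c * Real.log (K + 1) := by
            field_simp
            ring
        _ = ((∑ m ∈ Icc 1 K, b m) + b (K + 1)) / ((K + 1 : ℕ) : ℝ)
              + c * Real.log ((K + 1 : ℕ) : ℝ) := by rw [← hcast]
  intro K hK
  have h1 := main K hK
  have h2 : (∑ m ∈ Icc 1 K, b m) / K ≤ c := by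
    rw [div_le_iff₀ (by exact_mod_cast hK : (0:ℝ) < K)]
    exact hS K hK
  have hlogK : 0 ≤ Real.log K := Real.log_nonneg (by exact_mod_cast hK)
  nlinarith

lemma exp_small (t : ℝ) (ht : 0 ≤ t) (ht1 : t < 1) : Real.exp t ≤ 1 / (1 - t) := by
  have h1 : 1 - t ≤ Real.exp (-t) := by
    have := Real.add_one_le_exp (-t)
    linarith
  have h2 : 0 < 1 - t := by linarith
  have h3 : Real.exp (-t) = (Real.exp t)⁻¹ := Real.exp_neg t
  rw [h3] at h1
  have h4 : 0 < Real.exp t := Real.exp_pos t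
  rw [le_div_iff₀ h2]
  have := mul_le_mul_of_nonneg_left h1 (le_of_lt h4)
  rw [mul_inv_cancel₀ (ne_of_gt h4)] at this
  linarith [this]

lemma log_three : (32:ℝ)/31 ≤ Real.log 3 := by
  rw [Real.le_log_iff_exp_le (by norm_num : (0:ℝ) < 3)]
  have h1 : Real.exp ((32:ℝ)/31) = Real.exp 1 * Real.exp ((1:ℝ)/31) := by
    rw [← Real.exp_add]; norm_num
  have h2 : Real.exp ((1:ℝ)/31) ≤ 1 / (1 - 1/31) := exp_small _ (by norm_num) (by norm_num)
  have h3 : Real.exp 1 < 2.7182818286 := Real.exp_one_lt_d9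
  have h4 : (0:ℝ) < Real.exp ((1:ℝ)/31) := Real.exp_pos _
  rw [h1]
  calc Real.exp 1 * Real.exp ((1:ℝ)/31) ≤ 2.7182818286 * (1/(1-1/31)) := by
        apply mul_le_mul (le_of_lt h3) h2 (le_of_lt h4) (by norm_num)
    _ ≤ 3 := by norm_num

lemma log_ge_one {x : ℝ} (hx : 3 ≤ x) : 1 ≤ Real.log x := by
  have h1 : Real.log 3 ≤ Real.log x := Real.log_le_log (by norm_num) hx
  linarith [log_three]

lemma loglog_ge {x : ℝ} (hx : 3 ≤ x) : 1/32 ≤ Real.log (Real.log x) := by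
  rw [Real.le_log_iff_exp_le (by linarith [log_ge_one hx] : (0:ℝ) < Real.log x)]
  have h2 : Real.exp ((1:ℝ)/32) ≤ 1 / (1 - 1/32) := exp_small _ (by norm_num) (by norm_num)
  have h3 : (1:ℝ) / (1 - 1/32) = 32/31 := by norm_num
  have h4 : Real.log 3 ≤ Real.log x := Real.log_le_log (by norm_num) hx
  calc Real.exp ((1:ℝ)/32) ≤ 32/31 := by rw [← h3]; exact h2
    _ ≤ Real.log 3 := log_three
    _ ≤ Real.log x := h4

lemma rpow_anti {s t : ℝ} (hs : 0 < s) (hst : s ≤ t) :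
    t ^ (-(1:ℝ)/5) ≤ s ^ (-(1:ℝ)/5) := by
  have h1 : (-(1:ℝ)/5) = -(1/5) := by norm_num
  rw [h1, Real.rpow_neg (le_of_lt hs), Real.rpow_neg (by linarith)]
  have h2 : s ^ ((1:ℝ)/5) ≤ t ^ ((1:ℝ)/5) := Real.rpow_le_rpow (le_of_lt hs) hst (by norm_num)
  have h3 : 0 < s ^ ((1:ℝ)/5) := Real.rpow_pos_of_pos hs _
  exact inv_anti₀ h3 h2

lemma pow_inv32 : ((1:ℝ)/32) ^ (-(1:ℝ)/5) = 2 := by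
  have h1 : ((1:ℝ)/32) = (1/2) ^ (5:ℕ) := by norm_num
  rw [show (-(1:ℝ)/5) = -((1:ℝ)/5) by norm_num, Real.rpow_neg (by norm_num), h1,
    ← Real.rpow_natCast ((1:ℝ)/2) 5, ← Real.rpow_mul (by norm_num)]
  norm_num

lemma ell_le {x : ℝ} (hx : 3 ≤ x) :
    Real.log x ^ ((3:ℝ)/5) * Real.log (Real.log x) ^ (-(1:ℝ)/5) ≤ 2 * Real.log x := by
  have hu1 : 1 ≤ Real.log x := log_ge_one hx
  have hv : 1/32 ≤ Real.log (Real.log x) := loglog_ge hx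
  have h1 : Real.log (Real.log x) ^ (-(1:ℝ)/5) ≤ 2 := by
    rw [← pow_inv32]
    exact rpow_anti (by norm_num) hv
  have h2 : Real.log x ^ ((3:ℝ)/5) ≤ Real.log x := by
    have := Real.rpow_le_rpow_of_exponent_le hu1 (by norm_num : (3:ℝ)/5 ≤ 1)
    rwa [Real.rpow_one] at this
  have h3 : 0 ≤ Real.log x ^ ((3:ℝ)/5) := Real.rpow_nonneg (by linarith) _
  have h4 : 0 ≤ Real.log (Real.log x) ^ (-(1:ℝ)/5) := Real.rpow_nonneg (by linarith) _
  calc Real.log x ^ ((3:ℝ)/5) * Real.log (Real.log x) ^ (-(1:ℝ)/5)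
      ≤ Real.log x * 2 := mul_le_mul h2 h1 h4 (by linarith)
    _ = 2 * Real.log x := by ring

lemma ell_nonneg {x : ℝ} (hx : 3 ≤ x) :
    0 ≤ Real.log x ^ ((3:ℝ)/5) * Real.log (Real.log x) ^ (-(1:ℝ)/5) := by
  have hu1 : 1 ≤ Real.log x := log_ge_one hx
  have hv : 1/32 ≤ Real.log (Real.log x) := loglog_ge hx
  exact mul_nonneg (Real.rpow_nonneg (by linarith) _) (Real.rpow_nonneg (by linarith) _)

lemma sqrt_le_ell {x : ℝ} (hx : 3 ≤ x) :
    Real.log x ^ ((1:ℝ)/2)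
      ≤ 2 * (Real.log x ^ ((3:ℝ)/5) * Real.log (Real.log x) ^ (-(1:ℝ)/5)) := by
  set u := Real.log x with hu_def
  have hu1 : 1 ≤ u := log_ge_one hx
  have hu0 : 0 < u := by linarith
  have hv : 1/32 ≤ Real.log u := loglog_ge hx
  have hv0 : 0 < Real.log u := by linarith
  have hsq0 : 0 < u ^ ((1:ℝ)/2) := Real.rpow_pos_of_pos hu0 _
  have h1 : Real.log u ≤ 2 * u ^ ((1:ℝ)/2) := by
    have ha : Real.log (u ^ ((1:ℝ)/2)) = (1/2) * Real.log u := Real.log_rpow hu0 _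
    have hb : Real.log (u ^ ((1:ℝ)/2)) ≤ u ^ ((1:ℝ)/2) - 1 := Real.log_le_sub_one_of_pos hsq0
    nlinarith
  have h2 : (2 * u ^ ((1:ℝ)/2)) ^ (-(1:ℝ)/5) ≤ Real.log u ^ (-(1:ℝ)/5) :=
    rpow_anti hv0 h1
  have h3 : (2 * u ^ ((1:ℝ)/2)) ^ (-(1:ℝ)/5)
      = (2:ℝ) ^ (-(1:ℝ)/5) * u ^ (-(1:ℝ)/10) := by
    rw [Real.mul_rpow (by norm_num) (le_of_lt hsq0), ← Real.rpow_mul (le_of_lt hu0)]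
    norm_num
  have h4 : (1:ℝ)/2 ≤ (2:ℝ) ^ (-(1:ℝ)/5) := by
    rw [show (-(1:ℝ)/5) = -((1:ℝ)/5) by norm_num, Real.rpow_neg (by norm_num)]
    have h5 : (2:ℝ) ^ ((1:ℝ)/5) ≤ 2 := by
      have := Real.rpow_le_rpow_of_exponent_le (by norm_num : (1:ℝ) ≤ 2)
        (by norm_num : (1:ℝ)/5 ≤ 1)
      rwa [Real.rpow_one] at this
    have h6 : (0:ℝ) < (2:ℝ) ^ ((1:ℝ)/5) := Real.rpow_pos_of_pos (by norm_num) _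
    have h7 : (2:ℝ)⁻¹ ≤ ((2:ℝ) ^ ((1:ℝ)/5))⁻¹ := inv_anti₀ h6 h5
    linarith [h7]
  have hum : 0 ≤ u ^ (-(1:ℝ)/10) := Real.rpow_nonneg (le_of_lt hu0) _
  have h8 : (1/2 : ℝ) * u ^ (-(1:ℝ)/10) ≤ Real.log u ^ (-(1:ℝ)/5) := by
    calc (1/2 : ℝ) * u ^ (-(1:ℝ)/10) ≤ (2:ℝ) ^ (-(1:ℝ)/5) * u ^ (-(1:ℝ)/10) :=
          mul_le_mul_of_nonneg_right h4 hum
      _ = (2 * u ^ ((1:ℝ)/2)) ^ (-(1:ℝ)/5) := h3.symm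
      _ ≤ Real.log u ^ (-(1:ℝ)/5) := h2
  have h9 : 0 ≤ u ^ ((3:ℝ)/5) := Real.rpow_nonneg (le_of_lt hu0) _
  have h10 : u ^ ((3:ℝ)/5) * ((1/2 : ℝ) * u ^ (-(1:ℝ)/10))
      ≤ u ^ ((3:ℝ)/5) * Real.log u ^ (-(1:ℝ)/5) := mul_le_mul_of_nonneg_left h8 h9
  have h11 : u ^ ((3:ℝ)/5) * ((1/2 : ℝ) * u ^ (-(1:ℝ)/10)) = (1/2) * u ^ ((1:ℝ)/2) := by
    rw [mul_comm ((1/2 : ℝ)) _, ← mul_assoc, ← Real.rpow_add hu0]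
    norm_num
    ring
  rw [h11] at h10
  linarith

lemma u_le_exp {x C₀ : ℝ} (hx : 3 ≤ x) (hC₀ : 0 < C₀) :
    Real.log x ≤ (6400 / C₀ ^ 2) *
      Real.exp ((C₀/20) * (Real.log x ^ ((3:ℝ)/5) * Real.log (Real.log x) ^ (-(1:ℝ)/5))) := by
  set ℓ := Real.log x ^ ((3:ℝ)/5) * Real.log (Real.log x) ^ (-(1:ℝ)/5) with hℓ
  have hu1 : 1 ≤ Real.log x := log_ge_one hx
  have hu0 : (0:ℝ) < Real.log x := by linarith
  have hw := sqrt_le_ell hx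
  rw [← hℓ] at hw
  set w := Real.log x ^ ((1:ℝ)/2) with hwdef
  have hw0 : 0 ≤ w := Real.rpow_nonneg (le_of_lt hu0) _
  have hw2 : w * w = Real.log x := by
    rw [hwdef, ← Real.rpow_add hu0]
    norm_num
  set s := (C₀/40) * w with hs
  have hs0 : 0 ≤ s := by positivity
  have hsl : s ≤ (C₀/20) * ℓ := by
    rw [hs]
    calc (C₀/40) * w ≤ (C₀/40) * (2 * ℓ) := by
          apply mul_le_mul_of_nonneg_left hw (by positivity)
      _ = (C₀/20) * ℓ := by ring
  have hexp1 : Real.exp s ≤ Real.exp ((C₀/20) * ℓ) := Real.exp_le_exp.2 hsl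
  have hexp2 : s * s / 4 ≤ Real.exp s := by
    have h1 := Real.add_one_le_exp (s/2)
    have h2 : Real.exp s = Real.exp (s/2) * Real.exp (s/2) := by
      rw [← Real.exp_add]; ring_nf
    nlinarith
  have hkey : C₀ ^ 2 * Real.log x = 1600 * (s * s) := by
    rw [hs, ← hw2]; field_simp; ring
  rw [div_mul_eq_mul_div, le_div_iff₀ (by positivity : (0:ℝ) < C₀ ^ 2)]
  nlinarith

lemma Sb_le (a : ℕ → ℝ) (C D : ℝ) (hD : 0 ≤ D)
    (hRS : ∀ y : ℝ, 1 ≤ y → |(∑ n ∈ Icc 1 ⌊y⌋₊, (a n) ^ 2) - C * y| ≤ D * y ^ ((3:ℝ)/5)) :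
    ∀ j : ℕ, 1 ≤ j → ∑ m ∈ Icc 1 j, (a m) ^ 2 ≤ (C + D) * j := by
  intro j hj
  have hj1 : (1:ℝ) ≤ (j:ℝ) := by exact_mod_cast hj
  have h := hRS (j:ℝ) hj1
  rw [Nat.floor_natCast] at h
  have h2 : (j:ℝ) ^ ((3:ℝ)/5) ≤ (j:ℝ) := by
    have := Real.rpow_le_rpow_of_exponent_le hj1 (by norm_num : (3:ℝ)/5 ≤ 1)
    rwa [Real.rpow_one] at this
  have h3 := abs_le.1 h
  nlinarith [h3.2]

lemma a_sq_bound (a : ℕ → ℝ) (C D : ℝ) (hCD : 0 ≤ C + D) (hD : 0 ≤ D)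
    (hRS : ∀ y : ℝ, 1 ≤ y → |(∑ n ∈ Icc 1 ⌊y⌋₊, (a n) ^ 2) - C * y| ≤ D * y ^ ((3:ℝ)/5)) :
    ∀ n : ℕ, 1 ≤ n → |a (n ^ 2)| ≤ Real.sqrt (C + D) * n := by
  intro n hn
  have h1 : (a (n ^ 2)) ^ 2 ≤ ∑ m ∈ Icc 1 (n ^ 2), (a m) ^ 2 := by
    apply Finset.single_le_sum (f := fun m => (a m) ^ 2) (fun i _ => sq_nonneg _)
    rw [mem_Icc]
    exact ⟨by nlinarith, le_rfl⟩
  have h2 : ∑ m ∈ Icc 1 (n ^ 2), (a m) ^ 2 ≤ (C + D) * (n ^ 2 : ℕ) :=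
    Sb_le a C D hD hRS _ (by nlinarith)
  have h3 : (a (n ^ 2)) ^ 2 ≤ (C + D) * (n : ℝ) ^ 2 := by
    have : ((n ^ 2 : ℕ) : ℝ) = (n : ℝ) ^ 2 := by push_cast; ring
    rw [this] at h2
    linarith
  have h4 : |a (n ^ 2)| = Real.sqrt ((a (n ^ 2)) ^ 2) := (Real.sqrt_sq_eq_abs _).symm
  rw [h4]
  calc Real.sqrt ((a (n ^ 2)) ^ 2) ≤ Real.sqrt ((C + D) * (n : ℝ) ^ 2) :=
        Real.sqrt_le_sqrt h3
    _ = Real.sqrt (C + D) * n := by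
        rw [Real.sqrt_mul hCD, Real.sqrt_sq (by positivity)]

lemma trivial_bound (a : ℕ → ℝ) (C D : ℝ) (hCD : 0 ≤ C + D) (hD : 0 ≤ D)
    (hRS : ∀ y : ℝ, 1 ≤ y → |(∑ n ∈ Icc 1 ⌊y⌋₊, (a n) ^ 2) - C * y| ≤ D * y ^ ((3:ℝ)/5))
    (x : ℝ) (hx : 1 ≤ x) :
    |∑ n ∈ Icc 1 ⌊x⌋₊, a (n ^ 2)| ≤ Real.sqrt (C + D) * (x * x) := by
  set N := ⌊x⌋₊ with hN
  have hNx : (N : ℝ) ≤ x := Nat.floor_le (by linarith)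
  have hN0 : (0:ℝ) ≤ N := by positivity
  calc |∑ n ∈ Icc 1 N, a (n ^ 2)| ≤ ∑ n ∈ Icc 1 N, |a (n ^ 2)| :=
        Finset.abs_sum_le_sum_abs _ _
    _ ≤ ∑ n ∈ Icc 1 N, Real.sqrt (C + D) * n := by
        apply Finset.sum_le_sum
        intro n hn
        rw [mem_Icc] at hn
        exact a_sq_bound a C D hCD hD hRS n hn.1
    _ ≤ ∑ n ∈ Icc 1 N, Real.sqrt (C + D) * N := by
        apply Finset.sum_le_sum
        intro n hn
        rw [mem_Icc] at hn
        have : (n:ℝ) ≤ N := by exact_mod_cast hn.2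
        exact mul_le_mul_of_nonneg_left this (Real.sqrt_nonneg _)
    _ = Real.sqrt (C + D) * ((N:ℝ) * N) := by
        rw [Finset.sum_const, Nat.card_Icc]
        simp [nsmul_eq_mul]
        ring
    _ ≤ Real.sqrt (C + D) * (x * x) := by
        apply mul_le_mul_of_nonneg_left _ (Real.sqrt_nonneg _)
        nlinarith

set_option maxHeartbeats 800000 in
lemma Mbound (A C₀ x : ℝ) (hC₀ : 0 < C₀) (hx : 3 ≤ x)
    (hPNT : ∀ x : ℝ, 3 ≤ x →
      |∑ n ∈ Icc 1 ⌊x⌋₊, ((μ n : ℤ) : ℝ)| ≤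
        A * x * Real.exp (-C₀ * (Real.log x) ^ ((3:ℝ)/5) * (Real.log (Real.log x)) ^ (-(1:ℝ)/5)))
    (z t : ℕ) (hz4 : 4 ≤ z)
    (hlogz10 : Real.log x / 10 ≤ Real.log z) (hlogz1 : 1 < Real.log z)
    (hzt : z ≤ t) (htx : (t:ℝ) ≤ x) :
    |∑ d ∈ Icc 1 t, ((μ d : ℤ) : ℝ)| ≤ A * t *
      Real.exp (-(C₀/10) * (Real.log x ^ ((3:ℝ)/5) * Real.log (Real.log x) ^ (-(1:ℝ)/5))) := by
  have hu1 : 1 ≤ Real.log x := log_ge_one hx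
  have hu0 : (0:ℝ) < Real.log x := by linarith
  have hz0R : (0:ℝ) < (z:ℝ) := by
    have : (4:ℝ) ≤ (z:ℝ) := by exact_mod_cast hz4
    linarith
  have ht4 : 4 ≤ t := le_trans hz4 hzt
  have ht3 : (3:ℝ) ≤ (t:ℝ) := by
    have : (4:ℝ) ≤ (t:ℝ) := by exact_mod_cast ht4
    linarith
  have h0t : (0:ℝ) < (t:ℝ) := by linarith
  have hA0 : 0 ≤ A := by
    by_contra hA1
    push_neg at hA1
    have h := hPNT x hx
    have : A * x * Real.exp (-C₀ * (Real.log x) ^ ((3:ℝ)/5)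
        * (Real.log (Real.log x)) ^ (-(1:ℝ)/5)) < 0 :=
      mul_neg_of_neg_of_pos (mul_neg_of_neg_of_pos hA1 (by linarith)) (Real.exp_pos _)
    linarith [abs_nonneg (∑ n ∈ Icc 1 ⌊x⌋₊, ((μ n : ℤ) : ℝ))]
  have hpnt := hPNT (t:ℝ) ht3
  rw [Nat.floor_natCast] at hpnt
  have hlt : Real.log z ≤ Real.log t := Real.log_le_log hz0R (by exact_mod_cast hzt)
  have hlt1 : 1 < Real.log t := lt_of_lt_of_le hlogz1 hlt
  have hltx : Real.log t ≤ Real.log x := Real.log_le_log h0t htx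
  have hllt : Real.log (Real.log t) ≤ Real.log (Real.log x) :=
    Real.log_le_log (by linarith) hltx
  have hllt0 : 0 < Real.log (Real.log t) := Real.log_pos hlt1
  have ha : (1/10) * Real.log x ^ ((3:ℝ)/5) ≤ Real.log t ^ ((3:ℝ)/5) := by
    have h1 : Real.log x / 10 ≤ Real.log t := le_trans hlogz10 hlt
    have h2 : (Real.log x / 10) ^ ((3:ℝ)/5) ≤ Real.log t ^ ((3:ℝ)/5) :=
      Real.rpow_le_rpow (by positivity) h1 (by norm_num)
    have h3 : (Real.log x / 10) ^ ((3:ℝ)/5)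
        = (1/10 : ℝ) ^ ((3:ℝ)/5) * Real.log x ^ ((3:ℝ)/5) := by
      rw [show Real.log x / 10 = (1/10 : ℝ) * Real.log x by ring,
        Real.mul_rpow (by norm_num) (le_of_lt hu0)]
    have h4 : (1/10 : ℝ) ≤ (1/10 : ℝ) ^ ((3:ℝ)/5) := by
      have := Real.rpow_le_rpow_of_exponent_ge (by norm_num : (0:ℝ) < 1/10)
        (by norm_num : (1/10 : ℝ) ≤ 1) (by norm_num : (3:ℝ)/5 ≤ 1)
      rwa [Real.rpow_one] at this
    have h5 : (1/10) * Real.log x ^ ((3:ℝ)/5)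
        ≤ (1/10 : ℝ) ^ ((3:ℝ)/5) * Real.log x ^ ((3:ℝ)/5) :=
      mul_le_mul_of_nonneg_right h4 (Real.rpow_nonneg (le_of_lt hu0) _)
    linarith [h3.le, h3.symm.le]
  have hb : Real.log (Real.log x) ^ (-(1:ℝ)/5) ≤ Real.log (Real.log t) ^ (-(1:ℝ)/5) :=
    rpow_anti hllt0 hllt
  have hLt : (1/10) * (Real.log x ^ ((3:ℝ)/5) * Real.log (Real.log x) ^ (-(1:ℝ)/5))
      ≤ Real.log t ^ ((3:ℝ)/5) * Real.log (Real.log t) ^ (-(1:ℝ)/5) := by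
    have h5 : 0 ≤ Real.log (Real.log x) ^ (-(1:ℝ)/5) :=
      Real.rpow_nonneg (by linarith [loglog_ge hx]) _
    have h6 : 0 ≤ Real.log t ^ ((3:ℝ)/5) := Real.rpow_nonneg (by linarith) _
    calc (1/10) * (Real.log x ^ ((3:ℝ)/5) * Real.log (Real.log x) ^ (-(1:ℝ)/5))
        = ((1/10) * Real.log x ^ ((3:ℝ)/5)) * Real.log (Real.log x) ^ (-(1:ℝ)/5) := by
          ring
      _ ≤ Real.log t ^ ((3:ℝ)/5) * Real.log (Real.log t) ^ (-(1:ℝ)/5) :=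
          mul_le_mul ha hb h5 h6
  have harg : -C₀ * Real.log t ^ ((3:ℝ)/5) * Real.log (Real.log t) ^ (-(1:ℝ)/5)
      ≤ -(C₀/10) * (Real.log x ^ ((3:ℝ)/5) * Real.log (Real.log x) ^ (-(1:ℝ)/5)) := by
    have h5 := mul_le_mul_of_nonneg_left hLt (le_of_lt hC₀)
    nlinarith [h5]
  calc |∑ d ∈ Icc 1 t, ((μ d : ℤ) : ℝ)|
      ≤ A * t * Real.exp (-C₀ * Real.log t ^ ((3:ℝ)/5)
          * Real.log (Real.log t) ^ (-(1:ℝ)/5)) := hpnt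
    _ ≤ A * t * Real.exp (-(C₀/10) * (Real.log x ^ ((3:ℝ)/5)
          * Real.log (Real.log x) ^ (-(1:ℝ)/5))) := by
        apply mul_le_mul_of_nonneg_left (Real.exp_le_exp.2 harg) (by positivity)

set_option maxHeartbeats 1600000 in
lemma main_case (a : ℕ → ℝ) (C D A C₀ : ℝ)
    (hC : 0 < C) (hD : 0 < D) (hA : 0 < A) (hC₀ : 0 < C₀)
    (hHecke : ∀ m n : ℕ, 1 ≤ m → 1 ≤ n →
      a m * a n = ∑ d ∈ (Nat.gcd m n).divisors, a (m * n / d ^ 2))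
    (hRS : ∀ y : ℝ, 1 ≤ y → |(∑ n ∈ Icc 1 ⌊y⌋₊, (a n) ^ 2) - C * y| ≤ D * y ^ ((3:ℝ)/5))
    (hPNT : ∀ x : ℝ, 3 ≤ x →
      |∑ n ∈ Icc 1 ⌊x⌋₊, ((μ n : ℤ) : ℝ)| ≤
        A * x * Real.exp (-C₀ * (Real.log x) ^ ((3:ℝ)/5) * (Real.log (Real.log x)) ^ (-(1:ℝ)/5)))
    (x : ℝ) (hbig : 1100 < x) :
    |∑ n ∈ Icc 1 ⌊x⌋₊, a (n ^ 2)| ≤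
      (C + (C + D) + 4*A*C*(6400 / C₀ ^ 2) + 4*A*(C+D)*(6400 / C₀ ^ 2)) * x *
        Real.exp (-(min (C₀/20) (1/10)) * (Real.log x) ^ ((3:ℝ)/5)
          * (Real.log (Real.log x)) ^ (-(1:ℝ)/5)) := by
  have hx : (3:ℝ) ≤ x := by linarith
  have hCD : (0:ℝ) ≤ C + D := by linarith
  set C₁ : ℝ := min (C₀/20) (1/10) with hC₁def
  set K₅ : ℝ := 6400 / C₀ ^ 2 with hK₅def
  have hK₅0 : 0 < K₅ := by positivity
  have hC₁pos : 0 < C₁ := lt_min (by positivity) (by norm_num)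
  have hC₁a : C₁ ≤ C₀/20 := min_le_left _ _
  have hC₁b : C₁ ≤ 1/10 := min_le_right _ _
  have hu1 : 1 ≤ Real.log x := log_ge_one hx
  have hu0 : (0:ℝ) < Real.log x := by linarith
  have hx0 : (0:ℝ) < x := by linarith
  have hℓnn : 0 ≤ Real.log x ^ ((3:ℝ)/5) * Real.log (Real.log x) ^ (-(1:ℝ)/5) :=
    ell_nonneg hx
  have hℓle : Real.log x ^ ((3:ℝ)/5) * Real.log (Real.log x) ^ (-(1:ℝ)/5)
      ≤ 2 * Real.log x := ell_le hx
  have hux := u_le_exp hx hC₀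
  set ℓ := Real.log x ^ ((3:ℝ)/5) * Real.log (Real.log x) ^ (-(1:ℝ)/5) with hℓdef
  have hgoalexp : -C₁ * Real.log x ^ ((3:ℝ)/5) * Real.log (Real.log x) ^ (-(1:ℝ)/5)
      = -(C₁ * ℓ) := by rw [hℓdef]; ring
  rw [hgoalexp]
  have hC₁ℓ : C₁ * ℓ ≤ (1/5) * Real.log x := by
    calc C₁ * ℓ ≤ (1/10) * ℓ := mul_le_mul_of_nonneg_right hC₁b hℓnn
      _ ≤ (1/10) * (2 * Real.log x) := by linarith
      _ = (1/5) * Real.log x := by ring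
  have hexp_ge : x ^ (-(1:ℝ)/5) ≤ Real.exp (-(C₁ * ℓ)) := by
    have h2 : x ^ (-(1:ℝ)/5) = Real.exp (Real.log x * (-(1:ℝ)/5)) :=
      Real.rpow_def_of_pos hx0 _
    rw [h2]
    apply Real.exp_le_exp.2
    linarith
  have hx45 : x ^ ((4:ℝ)/5) ≤ x * Real.exp (-(C₁ * ℓ)) := by
    have h1 : x ^ ((4:ℝ)/5) = x * x ^ (-(1:ℝ)/5) := by
      rw [show ((4:ℝ)/5) = 1 + (-(1:ℝ)/5) by norm_num, Real.rpow_add hx0, Real.rpow_one]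
    rw [h1]
    exact mul_le_mul_of_nonneg_left hexp_ge (le_of_lt hx0)
  have h1x : (1:ℝ) ≤ x * Real.exp (-(C₁ * ℓ)) := by
    have h1 : (1:ℝ) ≤ x ^ ((4:ℝ)/5) := by
      have := Real.rpow_le_rpow_of_exponent_le (by linarith : (1:ℝ) ≤ x)
        (by norm_num : (0:ℝ) ≤ (4:ℝ)/5)
      rwa [Real.rpow_zero] at this
    linarith
  have hEu : Real.exp (-(C₀/10) * ℓ) * Real.log x ≤ K₅ * Real.exp (-(C₁ * ℓ)) := by
    calc Real.exp (-(C₀/10) * ℓ) * Real.log x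
        ≤ Real.exp (-(C₀/10) * ℓ) * (K₅ * Real.exp ((C₀/20) * ℓ)) := by
          apply mul_le_mul_of_nonneg_left _ (le_of_lt (Real.exp_pos _))
          rw [hK₅def]
          exact hux
      _ = K₅ * Real.exp (-(C₀/10) * ℓ + (C₀/20) * ℓ) := by rw [Real.exp_add]; ring
      _ = K₅ * Real.exp (-(C₀/20) * ℓ) := by
          rw [show -(C₀/10) * ℓ + (C₀/20) * ℓ = -(C₀/20) * ℓ by ring]
      _ ≤ K₅ * Real.exp (-(C₁ * ℓ)) := by
          apply mul_le_mul_of_nonneg_left _ (le_of_lt hK₅0)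
          apply Real.exp_le_exp.2
          have h7 := mul_le_mul_of_nonneg_right hC₁a hℓnn
          linarith
  -- integer setup
  set N := ⌊x⌋₊ with hNdef
  have hN1100 : 1100 ≤ N := by
    apply Nat.le_floor
    push_cast
    linarith
  have hNx : (N:ℝ) ≤ x := Nat.floor_le (le_of_lt hx0)
  have hxN : x - 1 < (N:ℝ) := Nat.sub_one_lt_floor x
  set y5 := x ^ ((1:ℝ)/5) with hy5def
  have hy50 : (0:ℝ) ≤ y5 := Real.rpow_nonneg (le_of_lt hx0) _
  have hy54 : (4:ℝ) ≤ y5 := by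
    have h1 : ((1024:ℝ)) ^ ((1:ℝ)/5) ≤ x ^ ((1:ℝ)/5) :=
      Real.rpow_le_rpow (by norm_num) (by linarith) (by norm_num)
    have h2 : ((1024:ℝ)) ^ ((1:ℝ)/5) = 4 := by
      rw [show (1024:ℝ) = (4:ℝ) ^ (5:ℕ) by norm_num, ← Real.rpow_natCast (4:ℝ) 5,
        ← Real.rpow_mul (by norm_num)]
      norm_num
    rw [hy5def]; linarith
  set z := ⌊y5⌋₊ with hzdef
  have hz4 : 4 ≤ z := Nat.le_floor (by push_cast; linarith)
  have hzy : (z:ℝ) ≤ y5 := Nat.floor_le hy50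
  have hzlow : y5 - 1 < (z:ℝ) := Nat.sub_one_lt_floor y5
  have hy5pow : y5 ^ (5:ℕ) = x := by
    rw [hy5def, ← Real.rpow_natCast (x ^ ((1:ℝ)/5)) 5, ← Real.rpow_mul (le_of_lt hx0)]
    norm_num
  have hy5x2 : y5 ≤ x / 2 := by
    have hxeq : x = y5 * y5 * y5 * y5 * y5 := by rw [← hy5pow]; ring
    have a1 : 16 ≤ y5 * y5 := by nlinarith [hy54]
    have a2 : 256 ≤ (y5 * y5) * (y5 * y5) := by nlinarith [a1]
    have a3 : 256 * y5 ≤ ((y5 * y5) * (y5 * y5)) * y5 :=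
      mul_le_mul_of_nonneg_right a2 hy50
    rw [le_div_iff₀ (by norm_num : (0:ℝ) < 2)]
    nlinarith [a3, hy54]
  have hzN1 : z + 1 ≤ N := by
    have h1 : (z:ℝ) + 1 ≤ x - 1 := by linarith [hzy, hy5x2]
    have h2 : ((z + 1 : ℕ) : ℝ) ≤ (N:ℝ) := by push_cast; linarith
    exact_mod_cast h2
  have hzN : z ≤ N := by omega
  have hz1 : 1 ≤ z := by omega
  have hK1 : 1 ≤ N / (z + 1) := (Nat.le_div_iff_mul_le (by omega)).2 (by omega)
  have hKN : N / (z + 1) ≤ N := Nat.div_le_self _ _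
  have hKx : ((N / (z + 1) : ℕ):ℝ) ≤ x := le_trans (by exact_mod_cast Nat.cast_le.2 hKN) hNx
  have hz0R : (0:ℝ) < (z:ℝ) := by
    have : (4:ℝ) ≤ (z:ℝ) := by exact_mod_cast hz4
    linarith
  have hzx : (z:ℝ) ≤ x := by linarith
  have hlogz10 : Real.log x / 10 ≤ Real.log z := by
    have h1 : y5 / 2 ≤ (z:ℝ) := by linarith
    have h2 : Real.log (y5 / 2) ≤ Real.log z :=
      Real.log_le_log (by linarith) h1
    have h3 : Real.log (y5 / 2) = (1/5) * Real.log x - Real.log 2 := by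
      rw [Real.log_div (by linarith) (by norm_num), hy5def, Real.log_rpow hx0]
    have h4 : Real.log 2 ≤ Real.log x / 10 := by
      have h5 : (10:ℝ) * Real.log 2 = Real.log 1024 := by
        rw [show (1024:ℝ) = 2 ^ (10:ℕ) by norm_num, Real.log_pow]
        push_cast; ring
      have h6 : Real.log 1024 ≤ Real.log x := Real.log_le_log (by norm_num) (by linarith)
      linarith
    linarith
  have hlogz1 : 1 < Real.log z := by
    have h1 : Real.exp 1 < 4 := lt_trans Real.exp_one_lt_d9 (by norm_num)
    have h2 : 1 < Real.log 4 := (Real.lt_log_iff_exp_lt (by norm_num)).2 h1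
    have h3 : Real.log 4 ≤ Real.log z := by
      apply Real.log_le_log (by norm_num)
      exact_mod_cast hz4
    linarith
  -- Mertens bound specialised
  have hMb : ∀ t : ℕ, z ≤ t → (t:ℝ) ≤ x →
      |∑ d ∈ Icc 1 t, ((μ d : ℤ) : ℝ)| ≤ A * t * Real.exp (-(C₀/10) * ℓ) := by
    intro t h1 h2
    have h3 := Mbound A C₀ x hC₀ hx hPNT z t hz4 hlogz10 hlogz1 h1 h2
    rw [← hℓdef] at h3
    exact h3
  -- identities
  have hT1 : ∑ n ∈ Icc 1 N, a (n ^ 2)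
      = ∑ n ∈ Icc 1 N, ∑ d ∈ n.divisors, ((μ d : ℤ) : ℝ) * (a (n / d)) ^ 2 :=
    Finset.sum_congr rfl (fun n hn => moebius_inv_sq a hHecke n (mem_Icc.1 hn).1)
  have hHyp := hyperbola (fun m => (a m) ^ 2) N z hz1 hzN
  have hOne := hyperbola (fun _ => (1:ℝ)) N z hz1 hzN
  simp only [mul_one, one_mul, Finset.sum_const, Nat.card_Icc, Nat.add_sub_cancel,
    nsmul_eq_mul] at hOne
  have hOneL : ∑ n ∈ Icc 1 N, ∑ d ∈ n.divisors, ((μ d : ℤ) : ℝ) = 1 := by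
    have h1 : ∀ n ∈ Icc 1 N, ∑ d ∈ n.divisors, ((μ d : ℤ) : ℝ)
        = if n = 1 then (1:ℝ) else 0 :=
      fun n hn => moebius_divisor_sum n (mem_Icc.1 hn).1
    rw [Finset.sum_congr rfl h1, Finset.sum_ite_eq' (Icc 1 N) 1 (fun _ => (1:ℝ))]
    have h2 : (1:ℕ) ∈ Icc 1 N := by
      rw [mem_Icc]; omega
    rw [if_pos h2]
  rw [hOneL] at hOne
  have hAsplit : ∑ d ∈ Icc 1 z, ((μ d : ℤ) : ℝ) * ∑ m ∈ Icc 1 (N / d), (a m) ^ 2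
      = C * (∑ d ∈ Icc 1 z, ((μ d : ℤ) : ℝ) * ((N / d : ℕ) : ℝ))
        + ∑ d ∈ Icc 1 z, ((μ d : ℤ) : ℝ)
            * ((∑ m ∈ Icc 1 (N / d), (a m) ^ 2) - C * ((N / d : ℕ) : ℝ)) := by
    rw [Finset.mul_sum, ← Finset.sum_add_distrib]
    exact Finset.sum_congr rfl (fun d _ => by ring)
  set SC := ∑ m ∈ Icc 1 (N / (z + 1)),
      ((∑ d ∈ Icc 1 (N / m), ((μ d : ℤ) : ℝ)) - ∑ d ∈ Icc 1 z, ((μ d : ℤ) : ℝ)) with hSCdef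
  set SB := ∑ m ∈ Icc 1 (N / (z + 1)), (a m) ^ 2 *
      ((∑ d ∈ Icc 1 (N / m), ((μ d : ℤ) : ℝ)) - ∑ d ∈ Icc 1 z, ((μ d : ℤ) : ℝ)) with hSBdef
  set ErrA := ∑ d ∈ Icc 1 z, ((μ d : ℤ) : ℝ)
      * ((∑ m ∈ Icc 1 (N / d), (a m) ^ 2) - C * ((N / d : ℕ) : ℝ)) with hErrAdef
  have hTeq : ∑ n ∈ Icc 1 N, a (n ^ 2) = C - C * SC + (ErrA + SB) := by
    rw [hT1, hHyp, hAsplit]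
    have hM1 : ∑ d ∈ Icc 1 z, ((μ d : ℤ) : ℝ) * ((N / d : ℕ) : ℝ) = 1 - SC := by
      linarith only [hOne]
    rw [hM1]
    ring
  -- error term bound
  have hErrA : |ErrA| ≤ (C + D) * x ^ ((4:ℝ)/5) := by
    have hpt : ∀ d ∈ Icc 1 z, |((μ d : ℤ) : ℝ)
        * ((∑ m ∈ Icc 1 (N / d), (a m) ^ 2) - C * ((N / d : ℕ) : ℝ))|
        ≤ (C + D) * x ^ ((3:ℝ)/5) := by
      intro d hd
      rw [mem_Icc] at hd
      have hd1 : (1:ℝ) ≤ (d:ℝ) := by exact_mod_cast hd.1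
      have hdz : (d:ℝ) ≤ (z:ℝ) := by exact_mod_cast hd.2
      have hdx : (d:ℝ) ≤ x := by linarith
      have hd0 : (0:ℝ) < (d:ℝ) := by linarith
      have hyd1 : (1:ℝ) ≤ x / d := (one_le_div hd0).2 hdx
      have h := hRS (x / d) hyd1
      have hfl : ⌊x / (d:ℝ)⌋₊ = N / d := by rw [Nat.floor_div_natCast x d, hNdef]
      rw [hfl] at h
      have hfl1 : ((N / d : ℕ) : ℝ) ≤ x / d := by
        rw [← hfl]; exact Nat.floor_le (by positivity)
      have hfl2 : x / d - 1 < ((N / d : ℕ) : ℝ) := by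
        rw [← hfl]; exact Nat.sub_one_lt_floor _
      have hydx : x / d ≤ x := div_le_self (le_of_lt hx0) hd1
      have hyd35 : (x / d) ^ ((3:ℝ)/5) ≤ x ^ ((3:ℝ)/5) :=
        Real.rpow_le_rpow (by positivity) hydx (by norm_num)
      have hx35 : (1:ℝ) ≤ x ^ ((3:ℝ)/5) := by
        have h9 := Real.rpow_le_rpow (by norm_num : (0:ℝ) ≤ 1)
          (by linarith : (1:ℝ) ≤ x) (by norm_num : (0:ℝ) ≤ (3:ℝ)/5)
        rwa [Real.one_rpow] at h9
      have habs := abs_le.1 h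
      have hmu := moebius_abs d
      have hq1 : C * (x / d - ((N / d : ℕ) : ℝ)) ≤ C * 1 :=
        mul_le_mul_of_nonneg_left (by linarith) hC.le
      have hq2 : 0 ≤ C * (x / d - ((N / d : ℕ) : ℝ)) :=
        mul_nonneg hC.le (by linarith)
      have hq3 : D * (x / d) ^ ((3:ℝ)/5) ≤ D * x ^ ((3:ℝ)/5) :=
        mul_le_mul_of_nonneg_left hyd35 hD.le
      have hq4 : C * 1 ≤ C * x ^ ((3:ℝ)/5) := mul_le_mul_of_nonneg_left hx35 hC.le
      have hq5 : 0 ≤ C * x ^ ((3:ℝ)/5) := mul_nonneg hC.le (by positivity)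
      have hterm : |(∑ m ∈ Icc 1 (N / d), (a m) ^ 2) - C * ((N / d : ℕ) : ℝ)|
          ≤ (C + D) * x ^ ((3:ℝ)/5) := by
        rw [abs_le]
        constructor
        · linarith only [habs.1, hq2, hq3, hq5]
        · linarith only [habs.2, hq1, hq3, hq4]
      calc |((μ d : ℤ) : ℝ) * ((∑ m ∈ Icc 1 (N / d), (a m) ^ 2) - C * ((N / d : ℕ) : ℝ))|
          = |((μ d : ℤ) : ℝ)| * |(∑ m ∈ Icc 1 (N / d), (a m) ^ 2) - C * ((N / d : ℕ) : ℝ)| :=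
            abs_mul _ _
        _ ≤ 1 * ((C + D) * x ^ ((3:ℝ)/5)) :=
            mul_le_mul hmu hterm (abs_nonneg _) (by norm_num)
        _ = (C + D) * x ^ ((3:ℝ)/5) := one_mul _
    have hx15 : x ^ ((1:ℝ)/5) * x ^ ((3:ℝ)/5) = x ^ ((4:ℝ)/5) := by
      rw [← Real.rpow_add hx0]; norm_num
    calc |ErrA| ≤ ∑ d ∈ Icc 1 z, |((μ d : ℤ) : ℝ)
          * ((∑ m ∈ Icc 1 (N / d), (a m) ^ 2) - C * ((N / d : ℕ) : ℝ))| := by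
          rw [hErrAdef]; exact Finset.abs_sum_le_sum_abs _ _
      _ ≤ ∑ _d ∈ Icc 1 z, (C + D) * x ^ ((3:ℝ)/5) := Finset.sum_le_sum hpt
      _ = (z:ℝ) * ((C + D) * x ^ ((3:ℝ)/5)) := by
          rw [Finset.sum_const, Nat.card_Icc, Nat.add_sub_cancel, nsmul_eq_mul]
      _ ≤ y5 * ((C + D) * x ^ ((3:ℝ)/5)) :=
          mul_le_mul_of_nonneg_right hzy (by positivity)
      _ = (C + D) * x ^ ((4:ℝ)/5) := by rw [hy5def, ← hx15]; ring
  -- partial sums bounds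
  have hSb := Sb_le a C D hD.le hRS
  have hsum_b := sum_div_le (fun m => (a m) ^ 2) (fun m => sq_nonneg _) (C + D) hSb
    (N / (z + 1)) hK1
  have hsum_1 := sum_div_le (fun _ => (1:ℝ)) (fun _ => by norm_num) 1
    (by
      intro j hj
      rw [Finset.sum_const, Nat.card_Icc, Nat.add_sub_cancel, nsmul_eq_mul, mul_one, one_mul])
    (N / (z + 1)) hK1
  have hE0 : (0:ℝ) < Real.exp (-(C₀/10) * ℓ) := Real.exp_pos _
  -- pointwise bound on the Mertens difference
  have hdiff : ∀ m ∈ Icc 1 (N / (z + 1)),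
      |(∑ d ∈ Icc 1 (N / m), ((μ d : ℤ) : ℝ)) - ∑ d ∈ Icc 1 z, ((μ d : ℤ) : ℝ)|
        ≤ 2 * A * (x / (m:ℝ)) * Real.exp (-(C₀/10) * ℓ) := by
    intro m hm
    rw [mem_Icc] at hm
    have hm0 : 0 < m := hm.1
    have hmN : m * (z + 1) ≤ N := (Nat.le_div_iff_mul_le (by omega)).1 hm.2
    have hmN' : (z + 1) * m ≤ N := by rw [Nat.mul_comm]; exact hmN
    have hzm : z + 1 ≤ N / m := (Nat.le_div_iff_mul_le hm0).2 hmN'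
    have h1 := hMb (N / m) (by omega)
      (le_trans (by exact_mod_cast Nat.cast_le.2 (Nat.div_le_self N m)) hNx)
    have h2 := hMb z le_rfl hzx
    have hc0 : (0:ℝ) < (m:ℝ) := by exact_mod_cast hm0
    have hc1 : ((N / m : ℕ) : ℝ) ≤ x / m := by
      calc ((N / m : ℕ) : ℝ) ≤ (N:ℝ) / (m:ℝ) := Nat.cast_div_le
        _ ≤ x / (m:ℝ) := by gcongr
    have hc2 : (z:ℝ) ≤ x / m := by
      refine le_trans ?_ hc1
      exact_mod_cast Nat.cast_le.2 (by omega : z ≤ N / m)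
    have hb1 : A * ((N / m : ℕ) : ℝ) * Real.exp (-(C₀/10) * ℓ)
        ≤ A * (x / m) * Real.exp (-(C₀/10) * ℓ) :=
      mul_le_mul_of_nonneg_right (mul_le_mul_of_nonneg_left hc1 hA.le) hE0.le
    have hb2 : A * (z:ℝ) * Real.exp (-(C₀/10) * ℓ)
        ≤ A * (x / m) * Real.exp (-(C₀/10) * ℓ) :=
      mul_le_mul_of_nonneg_right (mul_le_mul_of_nonneg_left hc2 hA.le) hE0.le
    calc |(∑ d ∈ Icc 1 (N / m), ((μ d : ℤ) : ℝ)) - ∑ d ∈ Icc 1 z, ((μ d : ℤ) : ℝ)|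
        ≤ |∑ d ∈ Icc 1 (N / m), ((μ d : ℤ) : ℝ)| + |∑ d ∈ Icc 1 z, ((μ d : ℤ) : ℝ)| :=
          abs_sub _ _
      _ ≤ A * ((N / m : ℕ) : ℝ) * Real.exp (-(C₀/10) * ℓ)
            + A * (z:ℝ) * Real.exp (-(C₀/10) * ℓ) := add_le_add h1 h2
      _ ≤ A * (x / m) * Real.exp (-(C₀/10) * ℓ)
            + A * (x / m) * Real.exp (-(C₀/10) * ℓ) := add_le_add hb1 hb2
      _ = 2 * A * (x / (m:ℝ)) * Real.exp (-(C₀/10) * ℓ) := by ring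
  -- bound SB
  have hSBb : |SB| ≤ 2 * A * x * Real.exp (-(C₀/10) * ℓ)
      * ((C + D) * (1 + Real.log ((N / (z + 1) : ℕ) : ℝ))) := by
    calc |SB| ≤ ∑ m ∈ Icc 1 (N / (z + 1)), |(a m) ^ 2 *
          ((∑ d ∈ Icc 1 (N / m), ((μ d : ℤ) : ℝ)) - ∑ d ∈ Icc 1 z, ((μ d : ℤ) : ℝ))| := by
          rw [hSBdef]; exact Finset.abs_sum_le_sum_abs _ _
      _ ≤ ∑ m ∈ Icc 1 (N / (z + 1)),
            (2 * A * x * Real.exp (-(C₀/10) * ℓ)) * ((a m) ^ 2 / (m:ℝ)) := by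
          apply Finset.sum_le_sum
          intro m hm
          rw [abs_mul, abs_of_nonneg (sq_nonneg (a m))]
          have h1 := mul_le_mul_of_nonneg_left (hdiff m hm) (sq_nonneg (a m))
          calc (a m) ^ 2 * |(∑ d ∈ Icc 1 (N / m), ((μ d : ℤ) : ℝ))
                - ∑ d ∈ Icc 1 z, ((μ d : ℤ) : ℝ)|
              ≤ (a m) ^ 2 * (2 * A * (x / (m:ℝ)) * Real.exp (-(C₀/10) * ℓ)) := h1
            _ = (2 * A * x * Real.exp (-(C₀/10) * ℓ)) * ((a m) ^ 2 / (m:ℝ)) := by ring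
      _ = (2 * A * x * Real.exp (-(C₀/10) * ℓ))
            * ∑ m ∈ Icc 1 (N / (z + 1)), (a m) ^ 2 / (m:ℝ) := by
          rw [Finset.mul_sum]
      _ ≤ (2 * A * x * Real.exp (-(C₀/10) * ℓ))
            * ((C + D) * (1 + Real.log ((N / (z + 1) : ℕ) : ℝ))) := by
          apply mul_le_mul_of_nonneg_left hsum_b (by positivity)
  -- bound SC
  have hSCb : |SC| ≤ 2 * A * x * Real.exp (-(C₀/10) * ℓ)
      * (1 * (1 + Real.log ((N / (z + 1) : ℕ) : ℝ))) := by
    calc |SC| ≤ ∑ m ∈ Icc 1 (N / (z + 1)),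
          |(∑ d ∈ Icc 1 (N / m), ((μ d : ℤ) : ℝ)) - ∑ d ∈ Icc 1 z, ((μ d : ℤ) : ℝ)| := by
          rw [hSCdef]; exact Finset.abs_sum_le_sum_abs _ _
      _ ≤ ∑ m ∈ Icc 1 (N / (z + 1)),
            (2 * A * x * Real.exp (-(C₀/10) * ℓ)) * ((1:ℝ) / (m:ℝ)) := by
          apply Finset.sum_le_sum
          intro m hm
          calc |(∑ d ∈ Icc 1 (N / m), ((μ d : ℤ) : ℝ)) - ∑ d ∈ Icc 1 z, ((μ d : ℤ) : ℝ)|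
              ≤ 2 * A * (x / (m:ℝ)) * Real.exp (-(C₀/10) * ℓ) := hdiff m hm
            _ = (2 * A * x * Real.exp (-(C₀/10) * ℓ)) * ((1:ℝ) / (m:ℝ)) := by ring
      _ = (2 * A * x * Real.exp (-(C₀/10) * ℓ))
            * ∑ m ∈ Icc 1 (N / (z + 1)), (1:ℝ) / (m:ℝ) := by rw [Finset.mul_sum]
      _ ≤ (2 * A * x * Real.exp (-(C₀/10) * ℓ))
            * (1 * (1 + Real.log ((N / (z + 1) : ℕ) : ℝ))) := by
          apply mul_le_mul_of_nonneg_left hsum_1 (by positivity)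
  -- assemble
  have hT2 : |∑ n ∈ Icc 1 N, a (n ^ 2)| ≤ C + C * |SC| + (|ErrA| + |SB|) := by
    rw [hTeq]
    have t1 : |C - C * SC + (ErrA + SB)| ≤ |C - C * SC| + |ErrA + SB| := abs_add_le _ _
    have t2 : |C - C * SC| ≤ |C| + |C * SC| := abs_sub _ _
    have t3 : |ErrA + SB| ≤ |ErrA| + |SB| := abs_add_le _ _
    have t4 : |C| = C := abs_of_pos hC
    have t5 : |C * SC| = C * |SC| := by rw [abs_mul, t4]
    linarith only [t1, t2, t3, t4.le, t4.ge, t5.le, t5.ge]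
  have hP0 : (0:ℝ) ≤ x * Real.exp (-(C₁ * ℓ)) := by positivity
  have e1 : C ≤ C * (x * Real.exp (-(C₁ * ℓ))) := le_mul_of_one_le_right hC.le h1x
  have e2 : |ErrA| ≤ (C + D) * (x * Real.exp (-(C₁ * ℓ))) :=
    le_trans hErrA (mul_le_mul_of_nonneg_left hx45 hCD)
  have hK0R : (0:ℝ) < ((N / (z + 1) : ℕ) : ℝ) := by exact_mod_cast hK1
  have hlogKx : Real.log ((N / (z + 1) : ℕ) : ℝ) ≤ Real.log x :=
    Real.log_le_log hK0R hKx
  have hlogK0 : 0 ≤ Real.log ((N / (z + 1) : ℕ) : ℝ) :=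
    Real.log_nonneg (by exact_mod_cast hK1)
  have h2u : 1 + Real.log ((N / (z + 1) : ℕ) : ℝ) ≤ 2 * Real.log x := by linarith
  have hmulE : ∀ c : ℝ, 0 ≤ c →
      2 * A * x * Real.exp (-(C₀/10) * ℓ) * (c * (1 + Real.log ((N / (z + 1) : ℕ) : ℝ)))
        ≤ (4 * A * c * K₅) * (x * Real.exp (-(C₁ * ℓ))) := by
    intro c hc
    have s1 : 2 * A * x * Real.exp (-(C₀/10) * ℓ) * (c * (1 + Real.log ((N / (z + 1) : ℕ) : ℝ)))
        ≤ 2 * A * x * Real.exp (-(C₀/10) * ℓ) * (c * (2 * Real.log x)) := by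
      apply mul_le_mul_of_nonneg_left _ (by positivity)
      exact mul_le_mul_of_nonneg_left h2u hc
    have s2 : 2 * A * x * Real.exp (-(C₀/10) * ℓ) * (c * (2 * Real.log x))
        = (4 * A * c * x) * (Real.exp (-(C₀/10) * ℓ) * Real.log x) := by ring
    have s3 : (4 * A * c * x) * (Real.exp (-(C₀/10) * ℓ) * Real.log x)
        ≤ (4 * A * c * x) * (K₅ * Real.exp (-(C₁ * ℓ))) := by
      apply mul_le_mul_of_nonneg_left hEu (by positivity)
    have s4 : (4 * A * c * x) * (K₅ * Real.exp (-(C₁ * ℓ)))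
        = (4 * A * c * K₅) * (x * Real.exp (-(C₁ * ℓ))) := by ring
    linarith only [s1, s2.le, s2.ge, s3, s4.le, s4.ge]
  have e3 : C * |SC| ≤ C * ((4 * A * 1 * K₅) * (x * Real.exp (-(C₁ * ℓ)))) := by
    apply mul_le_mul_of_nonneg_left _ hC.le
    exact le_trans hSCb (hmulE 1 (by norm_num))
  have e4 : |SB| ≤ (4 * A * (C + D) * K₅) * (x * Real.exp (-(C₁ * ℓ))) :=
    le_trans hSBb (hmulE (C + D) hCD)
  have hfin : (C + (C + D) + 4*A*C*K₅ + 4*A*(C+D)*K₅) * x * Real.exp (-(C₁ * ℓ))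
      = C * (x * Real.exp (-(C₁ * ℓ))) + (C + D) * (x * Real.exp (-(C₁ * ℓ)))
        + C * ((4 * A * 1 * K₅) * (x * Real.exp (-(C₁ * ℓ))))
        + (4 * A * (C + D) * K₅) * (x * Real.exp (-(C₁ * ℓ))) := by ring
  rw [hfin]
  linarith only [hT2, e1, e2, e3, e4]
set_option maxHeartbeats 800000 in
theorem theorem_two_abstract (a : ℕ → ℝ) (C D A C₀ : ℝ)
    (hC : 0 < C) (hD : 0 < D) (hA : 0 < A) (hC₀ : 0 < C₀)
    (hHecke : ∀ m n : ℕ, 1 ≤ m → 1 ≤ n →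
      a m * a n = ∑ d ∈ (Nat.gcd m n).divisors, a (m * n / d ^ 2))
    (hRS : ∀ y : ℝ, 1 ≤ y → |(∑ n ∈ Icc 1 ⌊y⌋₊, (a n) ^ 2) - C * y| ≤ D * y ^ ((3:ℝ)/5))
    (hPNT : ∀ x : ℝ, 3 ≤ x →
      |∑ n ∈ Icc 1 ⌊x⌋₊, ((μ n : ℤ) : ℝ)| ≤
        A * x * Real.exp (-C₀ * (Real.log x) ^ ((3:ℝ)/5) * (Real.log (Real.log x)) ^ (-(1:ℝ)/5))) :
    ∃ B > (0:ℝ), ∃ C₁ > (0:ℝ), ∀ x : ℝ, 3 ≤ x →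
      |∑ n ∈ Icc 1 ⌊x⌋₊, a (n ^ 2)| ≤
        B * x * Real.exp (-C₁ * (Real.log x) ^ ((3:ℝ)/5) * (Real.log (Real.log x)) ^ (-(1:ℝ)/5)) := by
  have hCD : (0:ℝ) ≤ C + D := by linarith
  refine ⟨C + (C + D) + 4*A*C*(6400 / C₀ ^ 2) + 4*A*(C+D)*(6400 / C₀ ^ 2)
      + 5500*Real.sqrt (C+D) + 1, by positivity,
    min (C₀/20) (1/10), lt_min (by positivity) (by norm_num), ?_⟩
  intro x hx
  set B : ℝ := C + (C + D) + 4*A*C*(6400 / C₀ ^ 2) + 4*A*(C+D)*(6400 / C₀ ^ 2)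
      + 5500*Real.sqrt (C+D) + 1 with hBdef
  set C₁ : ℝ := min (C₀/20) (1/10) with hC₁def
  set K₅ : ℝ := 6400 / C₀ ^ 2 with hK₅def
  have hK₅0 : 0 < K₅ := by positivity
  have hC₁pos : 0 < C₁ := lt_min (by positivity) (by norm_num)
  have hC₁a : C₁ ≤ C₀/20 := min_le_left _ _
  have hC₁b : C₁ ≤ 1/10 := min_le_right _ _
  have hu1 : 1 ≤ Real.log x := log_ge_one hx
  have hu0 : (0:ℝ) < Real.log x := by linarith
  have hx0 : (0:ℝ) < x := by linarith
  have hℓnn : 0 ≤ Real.log x ^ ((3:ℝ)/5) * Real.log (Real.log x) ^ (-(1:ℝ)/5) :=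
    ell_nonneg hx
  have hℓle : Real.log x ^ ((3:ℝ)/5) * Real.log (Real.log x) ^ (-(1:ℝ)/5)
      ≤ 2 * Real.log x := ell_le hx
  have hux := u_le_exp hx hC₀
  set ℓ := Real.log x ^ ((3:ℝ)/5) * Real.log (Real.log x) ^ (-(1:ℝ)/5) with hℓdef
  have hgoalexp : -C₁ * Real.log x ^ ((3:ℝ)/5) * Real.log (Real.log x) ^ (-(1:ℝ)/5)
      = -(C₁ * ℓ) := by rw [hℓdef]; ring
  rw [hgoalexp]
  have hC₁ℓ : C₁ * ℓ ≤ (1/5) * Real.log x := by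
    calc C₁ * ℓ ≤ (1/10) * ℓ := mul_le_mul_of_nonneg_right hC₁b hℓnn
      _ ≤ (1/10) * (2 * Real.log x) := by linarith
      _ = (1/5) * Real.log x := by ring
  have hexp_ge : x ^ (-(1:ℝ)/5) ≤ Real.exp (-(C₁ * ℓ)) := by
    have h2 : x ^ (-(1:ℝ)/5) = Real.exp (Real.log x * (-(1:ℝ)/5)) :=
      Real.rpow_def_of_pos hx0 _
    rw [h2]
    apply Real.exp_le_exp.2
    linarith
  have hx45 : x ^ ((4:ℝ)/5) ≤ x * Real.exp (-(C₁ * ℓ)) := by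
    have h1 : x ^ ((4:ℝ)/5) = x * x ^ (-(1:ℝ)/5) := by
      rw [show ((4:ℝ)/5) = 1 + (-(1:ℝ)/5) by norm_num, Real.rpow_add hx0, Real.rpow_one]
    rw [h1]
    exact mul_le_mul_of_nonneg_left hexp_ge (le_of_lt hx0)
  have h1x : (1:ℝ) ≤ x * Real.exp (-(C₁ * ℓ)) := by
    have h1 : (1:ℝ) ≤ x ^ ((4:ℝ)/5) := by
      have := Real.rpow_le_rpow_of_exponent_le (by linarith : (1:ℝ) ≤ x)
        (by norm_num : (0:ℝ) ≤ (4:ℝ)/5)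
      rwa [Real.rpow_zero] at this
    linarith
  have hEu : Real.exp (-(C₀/10) * ℓ) * Real.log x ≤ K₅ * Real.exp (-(C₁ * ℓ)) := by
    calc Real.exp (-(C₀/10) * ℓ) * Real.log x
        ≤ Real.exp (-(C₀/10) * ℓ) * (K₅ * Real.exp ((C₀/20) * ℓ)) := by
          apply mul_le_mul_of_nonneg_left _ (le_of_lt (Real.exp_pos _))
          rw [hK₅def]
          exact hux
      _ = K₅ * Real.exp (-(C₀/10) * ℓ + (C₀/20) * ℓ) := by rw [Real.exp_add]; ring
      _ = K₅ * Real.exp (-(C₀/20) * ℓ) := by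
          rw [show -(C₀/10) * ℓ + (C₀/20) * ℓ = -(C₀/20) * ℓ by ring]
      _ ≤ K₅ * Real.exp (-(C₁ * ℓ)) := by
          apply mul_le_mul_of_nonneg_left _ (le_of_lt hK₅0)
          apply Real.exp_le_exp.2
          have h7 := mul_le_mul_of_nonneg_right hC₁a hℓnn
          linarith
  rcases le_or_gt x 1100 with hsmall | hbig
  · -- small case
    have htb := trivial_bound a C D hCD (le_of_lt hD) hRS x (by linarith)
    have hexp5 : (1:ℝ)/5 ≤ Real.exp (-(C₁ * ℓ)) := by
      have h1 : Real.log x ≤ Real.log 3125 := Real.log_le_log hx0 (by linarith)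
      have h2 : Real.log 3125 = 5 * Real.log 5 := by
        rw [show (3125:ℝ) = 5 ^ (5:ℕ) by norm_num, Real.log_pow]
        push_cast; ring
      have h3 : C₁ * ℓ ≤ Real.log 5 := by linarith [hC₁ℓ]
      have h4 : Real.exp (-Real.log 5) ≤ Real.exp (-(C₁ * ℓ)) :=
        Real.exp_le_exp.2 (by linarith)
      have h5 : Real.exp (-Real.log 5) = 1/5 := by
        rw [Real.exp_neg, Real.exp_log (by norm_num : (0:ℝ) < 5)]
        norm_num
      linarith
    have hsq0 : 0 ≤ Real.sqrt (C + D) := Real.sqrt_nonneg _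
    calc |∑ n ∈ Icc 1 ⌊x⌋₊, a (n ^ 2)| ≤ Real.sqrt (C+D) * (x * x) := htb
      _ ≤ Real.sqrt (C+D) * (x * 1100) := by
          apply mul_le_mul_of_nonneg_left _ hsq0
          exact mul_le_mul_of_nonneg_left hsmall (le_of_lt hx0)
      _ = (5500 * Real.sqrt (C+D)) * x * (1/5) := by ring
      _ ≤ (5500 * Real.sqrt (C+D)) * x * Real.exp (-(C₁ * ℓ)) := by
          apply mul_le_mul_of_nonneg_left hexp5 (by positivity)
      _ ≤ B * x * Real.exp (-(C₁ * ℓ)) := by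
          have hBge : 5500 * Real.sqrt (C+D) ≤ B := by
            rw [hBdef]
            have h1 : (0:ℝ) ≤ 4*A*C*K₅ := by positivity
            have h2 : (0:ℝ) ≤ 4*A*(C+D)*K₅ := by positivity
            linarith
          exact mul_le_mul_of_nonneg_right
            (mul_le_mul_of_nonneg_right hBge (le_of_lt hx0)) (le_of_lt (Real.exp_pos _))
  · -- main case
    have h := main_case a C D A C₀ hC hD hA hC₀ hHecke hRS hPNT x hbig
    have hconv : -(min (C₀/20) (1/10)) * Real.log x ^ ((3:ℝ)/5)
        * Real.log (Real.log x) ^ (-(1:ℝ)/5) = -(C₁ * ℓ) := by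
      rw [hC₁def, hℓdef]; ring
    rw [hconv] at h
    have hBle : C + (C + D) + 4*A*C*(6400 / C₀ ^ 2) + 4*A*(C+D)*(6400 / C₀ ^ 2) ≤ B := by
      rw [hBdef]
      have := Real.sqrt_nonneg (C + D)
      linarith
    calc |∑ n ∈ Icc 1 ⌊x⌋₊, a (n ^ 2)|
        ≤ (C + (C + D) + 4*A*C*(6400 / C₀ ^ 2) + 4*A*(C+D)*(6400 / C₀ ^ 2)) * x
            * Real.exp (-(C₁ * ℓ)) := h
      _ ≤ B * x * Real.exp (-(C₁ * ℓ)) :=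
          mul_le_mul_of_nonneg_right
            (mul_le_mul_of_nonneg_right hBle (le_of_lt hx0)) (le_of_lt (Real.exp_pos _))
end

section
/- Let ã : ℕ → ℝ, κ ≥ 2 an integer, and define a(n) = ã(n) * n^{(κ-1)/2}. Suppose there exist constants B, C > 0 such that |∑_{n ≤ y} ã(n^2)| ≤ B*y*exp(-C*(log y)^{3/5}*(log log y)^{-1/5}) for all y ≥ 3. Then there exist constants B', C' > 0 such that |∑_{n ≤ x} a(n^2)| ≤ B'*x^κ*exp(-C'*(log x)^{3/5}*(log log x)^{-1/5}) for all x ≥ 3. -/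
open Finset

private lemma abel_aux (S f : ℕ → ℝ) (hS0 : S 0 = 0) :
    ∀ N : ℕ, ∑ n ∈ Icc 1 N, (S n - S (n - 1)) * f n
      = S N * f N - ∑ n ∈ Ico 1 N, S n * (f (n + 1) - f n) := by
  intro N
  induction N with
  | zero => simp [hS0]
  | succ N ih =>
    rcases Nat.eq_zero_or_pos N with h | h
    · subst h; simp [hS0]
    · rw [Finset.sum_Icc_succ_top (by omega), ih, Finset.sum_Ico_succ_top h]
      simp only [Nat.add_sub_cancel]
      ring

set_option maxHeartbeats 2000000 in
theorem corollary_three (atil : ℕ → ℝ) (κ : ℕ) (hκ : 2 ≤ κ)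
    (a : ℕ → ℝ) (ha : ∀ n : ℕ, a n = atil n * (n : ℝ) ^ (((κ : ℝ) - 1) / 2))
    (B C : ℝ) (hB : 0 < B) (hC : 0 < C)
    (hbound : ∀ y : ℝ, 3 ≤ y →
      |∑ n ∈ Icc 1 ⌊y⌋₊, atil (n ^ 2)| ≤
        B * y * Real.exp (-C * (Real.log y) ^ ((3:ℝ)/5) * (Real.log (Real.log y)) ^ (-(1:ℝ)/5))) :
    ∃ B' > (0:ℝ), ∃ C' > (0:ℝ), ∀ x : ℝ, 3 ≤ x →
      |∑ n ∈ Icc 1 ⌊x⌋₊, a (n ^ 2)| ≤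
        B' * x ^ (κ : ℝ) *
          Real.exp (-C' * (Real.log x) ^ ((3:ℝ)/5) * (Real.log (Real.log x)) ^ (-(1:ℝ)/5)) := by
  classical
  set S : ℕ → ℝ := fun m => ∑ n ∈ Icc 1 m, atil (n ^ 2) with hSdef
  set f : ℕ → ℝ := fun n => (n : ℝ) ^ (κ - 1) with hfdef
  have hS0 : S 0 = 0 := by simp [hSdef]
  have hSsucc : ∀ m : ℕ, S (m + 1) = S m + atil ((m + 1) ^ 2) := fun m =>
    Finset.sum_Icc_succ_top (Nat.succ_le_succ (Nat.zero_le m)) _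
  have hSsub : ∀ n : ℕ, 1 ≤ n → S n - S (n - 1) = atil (n ^ 2) := by
    intro n hn
    rcases n with _ | m
    · omega
    · simp [hSsucc m]
  -- basic log facts at 3
  have h3log : 1 < Real.log 3 := by
    rw [← Real.exp_lt_exp, Real.exp_log (by norm_num : (0:ℝ) < 3)]
    exact Real.exp_one_lt_d9.trans_le (by norm_num)
  have hll3 : 0 < Real.log (Real.log 3) := Real.log_pos h3log
  -- constants
  set D : ℝ := |S 1| + |S 2| with hDdef
  have hD0 : 0 ≤ D := by positivity
  set C₂ : ℝ := C / 2 ^ ((3:ℝ)/5) with hC2def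
  have hC₂pos : 0 < C₂ := by positivity
  set lam : ℝ := (Real.log (Real.log 3)) ^ ((1:ℝ)/5) with hlamdef
  have hlampos : 0 < lam := Real.rpow_pos_of_pos hll3 _
  -- pointwise bounds on S
  have hSb : ∀ m : ℕ, 3 ≤ m → |S m| ≤
      B * m * Real.exp (-C * (Real.log m) ^ ((3:ℝ)/5) * (Real.log (Real.log m)) ^ (-(1:ℝ)/5)) := by
    intro m hm
    have h := hbound (m : ℝ) (by exact_mod_cast hm)
    simpa [hSdef, Nat.floor_natCast] using h
  have hlogm : ∀ m : ℕ, 3 ≤ m → 1 < Real.log m := by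
    intro m hm
    exact h3log.trans_le (Real.log_le_log (by norm_num) (by exact_mod_cast hm))
  have hexp1 : ∀ m : ℕ, 3 ≤ m →
      Real.exp (-C * (Real.log m) ^ ((3:ℝ)/5) * (Real.log (Real.log m)) ^ (-(1:ℝ)/5)) ≤ 1 := by
    intro m hm
    rw [Real.exp_le_one_iff]
    have h1 := hlogm m hm
    have hA : 0 ≤ (Real.log m) ^ ((3:ℝ)/5) := Real.rpow_nonneg (by linarith) _
    have hBq : 0 ≤ (Real.log (Real.log m)) ^ (-(1:ℝ)/5) :=
      Real.rpow_nonneg (Real.log_nonneg h1.le) _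
    have e : -C * (Real.log m) ^ ((3:ℝ)/5) * (Real.log (Real.log m)) ^ (-(1:ℝ)/5)
        = -(C * (Real.log m) ^ ((3:ℝ)/5) * (Real.log (Real.log m)) ^ (-(1:ℝ)/5)) := by ring
    rw [e]
    have := mul_nonneg (mul_nonneg hC.le hA) hBq
    linarith
  have hStriv : ∀ m : ℕ, |S m| ≤ B * m + D := by
    intro m
    rcases lt_or_ge m 3 with h | h
    · interval_cases m
      · simp only [hS0, abs_zero, Nat.cast_zero]
        nlinarith [abs_nonneg (S 1), abs_nonneg (S 2)]
      · simp only [hDdef, Nat.cast_one]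
        nlinarith [abs_nonneg (S 2)]
      · simp only [hDdef, Nat.cast_ofNat]
        nlinarith [abs_nonneg (S 1)]
    · have h1 := (hSb m h)
      have h2 := hexp1 m h
      have h3 : B * m * Real.exp (-C * (Real.log m) ^ ((3:ℝ)/5) *
          (Real.log (Real.log m)) ^ (-(1:ℝ)/5)) ≤ B * m := by
        have : (0:ℝ) ≤ B * m := by positivity
        nlinarith
      linarith
  refine ⟨2*B + (3*B + D) * 3^(κ-1) + 1, by positivity, min C₂ lam, lt_min hC₂pos hlampos, ?_⟩
  intro x hx
  have hx0 : (0:ℝ) < x := by linarith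
  set N : ℕ := ⌊x⌋₊ with hNdef
  have hN3 : 3 ≤ N := Nat.le_floor (by exact_mod_cast hx)
  have hNx : (N:ℝ) ≤ x := Nat.floor_le hx0.le
  have hNx' : x - 1 < (N:ℝ) := Nat.sub_one_lt_floor x
  have hsx : Real.sqrt x ^ 2 = x := Real.sq_sqrt hx0.le
  have hsx0 : 0 ≤ Real.sqrt x := Real.sqrt_nonneg x
  have hsx1 : (3:ℝ)/2 ≤ Real.sqrt x := by nlinarith
  have hsxN : Real.sqrt x ≤ (N:ℝ) := by nlinarith [sq_nonneg (Real.sqrt x - 2)]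
  have hlx : 1 < Real.log x := h3log.trans_le (Real.log_le_log (by norm_num) hx)
  have hllx : 0 < Real.log (Real.log x) := Real.log_pos hlx
  have hll3x : Real.log (Real.log 3) ≤ Real.log (Real.log x) :=
    Real.log_le_log (by linarith) (Real.log_le_log (by norm_num) hx)
  set P : ℝ := (Real.log x) ^ ((3:ℝ)/5) with hPdef
  set Q : ℝ := (Real.log (Real.log x)) ^ (-(1:ℝ)/5) with hQdef
  have hP0 : 0 ≤ P := Real.rpow_nonneg (by linarith) _
  have hQ0 : 0 ≤ Q := Real.rpow_nonneg hllx.le _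
  set E2 : ℝ := Real.exp (-C₂ * P * Q) with hE2def
  set E' : ℝ := Real.exp (-min C₂ lam * P * Q) with hE'def
  have hE20 : 0 ≤ E2 := (Real.exp_pos _).le
  have hE'0 : 0 ≤ E' := (Real.exp_pos _).le
  -- E' ≥ 1/x
  have hE'x : x⁻¹ ≤ E' := by
    have h1 : Q ≤ (Real.log (Real.log 3)) ^ (-(1:ℝ)/5) :=
      Real.rpow_le_rpow_of_nonpos hll3 hll3x (by norm_num)
    have h2 : P ≤ Real.log x := by
      have := Real.rpow_le_rpow_of_exponent_le hlx.le (by norm_num : (3:ℝ)/5 ≤ 1)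
      rwa [Real.rpow_one] at this
    have h3 : lam * (Real.log (Real.log 3)) ^ (-(1:ℝ)/5) = 1 := by
      rw [hlamdef, ← Real.rpow_add hll3]
      norm_num
    have h4 : min C₂ lam * P * Q ≤ Real.log x := by
      have h5 : min C₂ lam * P * Q ≤ lam * P * ((Real.log (Real.log 3)) ^ (-(1:ℝ)/5)) := by
        apply mul_le_mul (mul_le_mul (min_le_right _ _) le_rfl hP0 hlampos.le) h1 hQ0
        positivity
      have h6 : lam * P * ((Real.log (Real.log 3)) ^ (-(1:ℝ)/5)) = P := by
        rw [show lam * P * ((Real.log (Real.log 3)) ^ (-(1:ℝ)/5))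
            = (lam * (Real.log (Real.log 3)) ^ (-(1:ℝ)/5)) * P from by ring, h3, one_mul]
      linarith
    have h7 : x⁻¹ = Real.exp (-Real.log x) := by rw [Real.exp_neg, Real.exp_log hx0]
    rw [h7, hE'def]
    apply Real.exp_le_exp.mpr
    have e : -min C₂ lam * P * Q = -(min C₂ lam * P * Q) := by ring
    rw [e]
    linarith
  -- key comparison
  have hkey : ∀ m : ℕ, 3 ≤ m → Real.sqrt x ≤ (m:ℝ) → (m:ℝ) ≤ x →
      Real.exp (-C * (Real.log m) ^ ((3:ℝ)/5) * (Real.log (Real.log m)) ^ (-(1:ℝ)/5)) ≤ E2 := by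
    intro m hm3 hsm hmx
    rw [hE2def]
    apply Real.exp_le_exp.mpr
    have hm1 : 1 < Real.log m := hlogm m hm3
    have hlm_le : Real.log m ≤ Real.log x := Real.log_le_log (by positivity) hmx
    have hhalf : Real.log x / 2 ≤ Real.log m := by
      have h := Real.log_le_log (Real.sqrt_pos.mpr hx0) hsm
      rwa [Real.log_sqrt hx0.le] at h
    have hPm : P / 2 ^ ((3:ℝ)/5) ≤ (Real.log m) ^ ((3:ℝ)/5) := by
      have h1 : (Real.log x / 2) ^ ((3:ℝ)/5) ≤ (Real.log m) ^ ((3:ℝ)/5) :=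
        Real.rpow_le_rpow (by linarith) hhalf (by norm_num)
      rwa [Real.div_rpow (by linarith) (by norm_num), ← hPdef] at h1
    have hQm : Q ≤ (Real.log (Real.log m)) ^ (-(1:ℝ)/5) := by
      have hllm : 0 < Real.log (Real.log m) := Real.log_pos hm1
      exact Real.rpow_le_rpow_of_nonpos hllm (Real.log_le_log (by linarith) hlm_le) (by norm_num)
    have hAm0 : 0 ≤ (Real.log m) ^ ((3:ℝ)/5) := Real.rpow_nonneg (by linarith) _
    have hmain : C₂ * P * Q ≤ C * (Real.log m) ^ ((3:ℝ)/5) *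
        (Real.log (Real.log m)) ^ (-(1:ℝ)/5) := by
      have e1 : C₂ * P * Q = C * (P / 2 ^ ((3:ℝ)/5)) * Q := by rw [hC2def]; ring
      rw [e1]
      apply mul_le_mul (mul_le_mul le_rfl hPm (by positivity) hC.le) hQm hQ0 (by positivity)
    have e2 : -C₂ * P * Q = -(C₂ * P * Q) := by ring
    have e3 : -C * (Real.log m) ^ ((3:ℝ)/5) * (Real.log (Real.log m)) ^ (-(1:ℝ)/5)
        = -(C * (Real.log m) ^ ((3:ℝ)/5) * (Real.log (Real.log m)) ^ (-(1:ℝ)/5)) := by ring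
    rw [e2, e3]
    linarith
  -- f facts
  have hfmono : ∀ n : ℕ, f n ≤ f (n + 1) := by
    intro n
    simp only [hfdef]
    exact pow_le_pow_left₀ (by positivity) (by exact_mod_cast Nat.le_succ n) _
  have hΔ0 : ∀ n : ℕ, 0 ≤ f (n+1) - f n := fun n => sub_nonneg.mpr (hfmono n)
  have hf0 : f 0 = 0 := by
    simp only [hfdef, Nat.cast_zero]
    exact zero_pow (by omega)
  have hfnonneg : ∀ n : ℕ, 0 ≤ f n := fun n => by simp only [hfdef]; positivity
  have htel : ∀ m : ℕ, ∑ n ∈ range m, (f (n+1) - f n) = f m := by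
    intro m
    rw [Finset.sum_range_sub f m, hf0, sub_zero]
  -- rewrite goal sum via Abel
  have hgoal_sum : ∑ n ∈ Icc 1 N, a (n ^ 2)
      = S N * f N - ∑ n ∈ Ico 1 N, S n * (f (n+1) - f n) := by
    rw [← abel_aux S f hS0 N]
    apply Finset.sum_congr rfl
    intro n hn
    have hn1 : 1 ≤ n := (Finset.mem_Icc.mp hn).1
    rw [hSsub n hn1, ha]
    congr 1
    have hn0 : (0:ℝ) < (n:ℝ) := by exact_mod_cast hn1
    simp only [hfdef]
    push_cast
    rw [show ((n:ℝ)^2) = (n:ℝ) ^ ((2:ℕ):ℝ) from (Real.rpow_natCast _ 2).symm,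
      ← Real.rpow_natCast (n:ℝ) (κ - 1), ← Real.rpow_mul hn0.le]
    congr 1
    rw [Nat.cast_sub (by omega : 1 ≤ κ), Nat.cast_one]
    push_cast
    ring
  rw [hgoal_sum]
  -- split M, K
  set M : ℝ := max (Real.sqrt x) 2 with hMdef
  have hM0 : 0 ≤ M := le_trans hsx0 (le_max_left _ _)
  set K : ℕ := ⌊M⌋₊ with hKdef
  have hKM : (K:ℝ) ≤ M := Nat.floor_le hM0
  have hMK1 : M < (K:ℝ) + 1 := by exact_mod_cast Nat.lt_floor_add_one M
  have hM3 : M + 1 ≤ 3 * Real.sqrt x := by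
    have h1 : M ≤ Real.sqrt x + 2 := max_le (by linarith) (by linarith)
    linarith
  -- absolute value expansion
  have habs : |S N * f N - ∑ n ∈ Ico 1 N, S n * (f (n+1) - f n)| ≤
      |S N| * f N + ∑ n ∈ Ico 1 N, |S n| * (f (n+1) - f n) := by
    refine (abs_sub _ _).trans ?_
    rw [abs_mul, abs_of_nonneg (hfnonneg N)]
    gcongr
    refine (Finset.abs_sum_le_sum_abs _ _).trans ?_
    apply le_of_eq
    apply Finset.sum_congr rfl
    intro n _
    rw [abs_mul, abs_of_nonneg (hΔ0 n)]
  -- boundary term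
  have hbdry : |S N| * f N ≤ B * (x * x^(κ-1)) * E2 := by
    have h1 : |S N| ≤ B * N * E2 := by
      refine (hSb N hN3).trans ?_
      exact mul_le_mul_of_nonneg_left (hkey N hN3 hsxN hNx) (by positivity)
    have hfN : f N ≤ x^(κ-1) := by
      simp only [hfdef]; exact pow_le_pow_left₀ (by positivity) hNx _
    calc |S N| * f N ≤ (B * N * E2) * f N :=
          mul_le_mul_of_nonneg_right h1 (hfnonneg N)
      _ = B * E2 * ((N:ℝ) * f N) := by ring
      _ ≤ B * E2 * (x * x^(κ-1)) := by
          apply mul_le_mul_of_nonneg_left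
            (mul_le_mul hNx hfN (hfnonneg N) hx0.le) (by positivity)
      _ = B * (x * x^(κ-1)) * E2 := by ring
  -- middle sum
  have hmid : ∑ n ∈ Ico 1 N, |S n| * (f (n+1) - f n) ≤
      (3*B + D) * 3^(κ-1) * x^(κ-1) + B * (x * x^(κ-1)) * E2 := by
    have hpt : ∀ n ∈ Ico 1 N, |S n| * (f (n+1) - f n) ≤
        (if n ≤ K then (B*M + D) * (f (n+1) - f n) else 0)
          + B * x * E2 * (f (n+1) - f n) := by
      intro n hn
      obtain ⟨hn1, hnN⟩ := Finset.mem_Ico.mp hn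
      by_cases hcase : n ≤ K
      · rw [if_pos hcase]
        have h3 : (n:ℝ) ≤ M := le_trans (by exact_mod_cast hcase) hKM
        have h1 : |S n| ≤ B * M + D := by
          have h2 := hStriv n
          nlinarith [mul_le_mul_of_nonneg_left h3 hB.le]
        have hterm2 : 0 ≤ B * x * E2 * (f (n+1) - f n) := by
          have := hΔ0 n; positivity
        nlinarith [mul_le_mul_of_nonneg_right h1 (hΔ0 n)]
      · rw [if_neg hcase, zero_add]
        have hKn : (K:ℝ) + 1 ≤ (n:ℝ) := by exact_mod_cast Nat.succ_le_of_lt (not_le.mp hcase)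
        have hMn : M < (n:ℝ) := lt_of_lt_of_le hMK1 hKn
        have hn3 : 3 ≤ n := by
          have h2 : (2:ℝ) < (n:ℝ) := lt_of_le_of_lt (le_max_right _ _) hMn
          have : 2 < n := by exact_mod_cast h2
          omega
        have hsn : Real.sqrt x ≤ (n:ℝ) := le_trans (le_max_left _ _) hMn.le
        have hnx : (n:ℝ) ≤ x := le_trans (by exact_mod_cast hnN.le) hNx
        have h1 : |S n| ≤ B * n * E2 :=
          (hSb n hn3).trans (mul_le_mul_of_nonneg_left (hkey n hn3 hsn hnx) (by positivity))
        have h2 : |S n| ≤ B * x * E2 := by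
          refine h1.trans ?_
          apply mul_le_mul_of_nonneg_right
            (mul_le_mul_of_nonneg_left hnx hB.le) hE20
        exact mul_le_mul_of_nonneg_right h2 (hΔ0 n)
    have hsplit := Finset.sum_le_sum hpt
    rw [Finset.sum_add_distrib] at hsplit
    have hBMD0 : 0 ≤ B*M + D := by positivity
    have hs1 : (∑ n ∈ Ico 1 N, if n ≤ K then (B*M+D)*(f (n+1) - f n) else 0)
        ≤ (B*M+D) * f (K+1) := by
      have e1 : (∑ n ∈ Ico 1 N, if n ≤ K then (B*M+D)*(f (n+1)-f n) else 0)
          = ∑ n ∈ (Ico 1 N).filter (fun n => n ≤ K), (B*M+D)*(f (n+1)-f n) :=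
        (Finset.sum_filter _ _).symm
      rw [e1]
      have hsub : (Ico 1 N).filter (fun n => n ≤ K) ⊆ range (K+1) := by
        intro n hn
        simp only [Finset.mem_filter, Finset.mem_Ico, Finset.mem_range] at hn ⊢
        omega
      calc ∑ n ∈ (Ico 1 N).filter (fun n => n ≤ K), (B*M+D)*(f (n+1)-f n)
          ≤ ∑ n ∈ range (K+1), (B*M+D)*(f (n+1)-f n) :=
            Finset.sum_le_sum_of_subset_of_nonneg hsub
              (fun i _ _ => mul_nonneg hBMD0 (hΔ0 i))
        _ = (B*M+D) * ∑ n ∈ range (K+1), (f (n+1)-f n) := by rw [Finset.mul_sum]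
        _ = (B*M+D) * f (K+1) := by rw [htel]
    have hfK : f (K+1) ≤ (3*Real.sqrt x)^(κ-1) := by
      simp only [hfdef]
      have h1 : ((K+1:ℕ):ℝ) ≤ 3*Real.sqrt x := by push_cast; linarith
      exact pow_le_pow_left₀ (by positivity) h1 _
    have hsq : Real.sqrt x * (Real.sqrt x)^(κ-1) ≤ x^(κ-1) := by
      have e1 : Real.sqrt x * (Real.sqrt x)^(κ-1) = (Real.sqrt x)^κ := by
        rw [← pow_succ']
        congr 1
        omega
      rw [e1]
      have h1 : (Real.sqrt x)^κ ≤ (Real.sqrt x)^(2*(κ-1)) :=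
        pow_le_pow_right₀ (by linarith) (by omega)
      have h2 : (Real.sqrt x)^(2*(κ-1)) = x^(κ-1) := by
        rw [pow_mul, hsx]
      linarith
    have hBM : B*M + D ≤ (3*B+D) * Real.sqrt x := by
      have hM3' : M ≤ 3*Real.sqrt x := by linarith
      nlinarith [mul_le_mul_of_nonneg_left hM3' hB.le,
        mul_nonneg hD0 (by linarith : (0:ℝ) ≤ Real.sqrt x - 1)]
    have hs1' : (B*M+D) * f (K+1) ≤ (3*B+D)*3^(κ-1)*x^(κ-1) := by
      calc (B*M+D) * f (K+1) ≤ ((3*B+D)*Real.sqrt x) * (3*Real.sqrt x)^(κ-1) :=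
            mul_le_mul hBM hfK (hfnonneg _) (by positivity)
        _ = (3*B+D)*3^(κ-1) * (Real.sqrt x * (Real.sqrt x)^(κ-1)) := by
            rw [mul_pow]; ring
        _ ≤ (3*B+D)*3^(κ-1) * x^(κ-1) :=
            mul_le_mul_of_nonneg_left hsq (by positivity)
    have hs2 : ∑ n ∈ Ico 1 N, B*x*E2*(f (n+1)-f n) ≤ B*(x*x^(κ-1))*E2 := by
      rw [← Finset.mul_sum]
      have h1 : ∑ n ∈ Ico 1 N, (f (n+1)-f n) ≤ f N := by
        calc ∑ n ∈ Ico 1 N, (f (n+1)-f n)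
            ≤ ∑ n ∈ range N, (f (n+1)-f n) :=
              Finset.sum_le_sum_of_subset_of_nonneg
                (fun n hn => by
                  simp only [Finset.mem_Ico, Finset.mem_range] at hn ⊢; omega)
                (fun i _ _ => hΔ0 i)
          _ = f N := htel N
      have hfN : f N ≤ x^(κ-1) := by
        simp only [hfdef]; exact pow_le_pow_left₀ (by positivity) hNx _
      calc B*x*E2 * (∑ n ∈ Ico 1 N, (f (n+1)-f n))
          ≤ B*x*E2 * x^(κ-1) :=
            mul_le_mul_of_nonneg_left (h1.trans hfN) (by positivity)
        _ = B*(x*x^(κ-1))*E2 := by ring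
    linarith
  -- final assembly
  have hE2E' : E2 ≤ E' := by
    rw [hE2def, hE'def]
    apply Real.exp_le_exp.mpr
    have h1 := mul_le_mul_of_nonneg_right
      (mul_le_mul_of_nonneg_right (min_le_left C₂ lam) hP0) hQ0
    have e2 : -C₂ * P * Q = -(C₂ * P * Q) := by ring
    have e3 : -min C₂ lam * P * Q = -(min C₂ lam * P * Q) := by ring
    rw [e2, e3]
    linarith
  have hxpow : x ^ (κ:ℝ) = x * x^(κ-1) := by
    rw [Real.rpow_natCast]
    rw [show x * x^(κ-1) = x^(κ-1+1) from (pow_succ' x (κ-1)).symm]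
    congr 1
    omega
  have hX0 : 0 ≤ x * x^(κ-1) := by positivity
  have hc0 : (0:ℝ) ≤ (3*B+D)*3^(κ-1) := by positivity
  have key1 : B*(x*x^(κ-1))*E2 ≤ B*(x*x^(κ-1))*E' :=
    mul_le_mul_of_nonneg_left hE2E' (by positivity)
  have key2 : x^(κ-1) ≤ (x*x^(κ-1))*E' := by
    have h1 : (x*x^(κ-1)) * x⁻¹ ≤ (x*x^(κ-1)) * E' := mul_le_mul_of_nonneg_left hE'x hX0
    have h2 : (x*x^(κ-1)) * x⁻¹ = x^(κ-1) := by
      field_simp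
    linarith
  calc |S N * f N - ∑ n ∈ Ico 1 N, S n * (f (n+1) - f n)|
      ≤ |S N| * f N + ∑ n ∈ Ico 1 N, |S n| * (f (n+1) - f n) := habs
    _ ≤ B*(x*x^(κ-1))*E2 + ((3*B+D)*3^(κ-1)*x^(κ-1) + B*(x*x^(κ-1))*E2) :=
        add_le_add hbdry hmid
    _ ≤ (2*B + (3*B + D) * 3^(κ-1) + 1) * (x*x^(κ-1)) * E' := by
        linarith [key1, mul_le_mul_of_nonneg_left key2 hc0,
          mul_nonneg hX0 hE'0]
    _ = (2*B + (3*B + D) * 3^(κ-1) + 1) * x ^ (κ:ℝ) * E' := by rw [hxpow]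
end
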